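/- arXiv:1406.6440 — 5 statements merged into one kernel-verified Lean document; each statement's English description precedes it below -/
import Mathlib

section
/- The normalized volume of the hypersimplex Δ_{k,n}, multiplied by n!, equals the Eulerian number A(n,k), the number of permutations of {1,...,n} with exactly k-1 descents. -/
open scoped Pointwise
open MeasureTheory Nat

namespace MixedEulerian

/-- A division of a finite set `S` into an ordered sequence of blocks,
with all elements of earlier blocks strictly smaller than those of later blocks. -/
def IsDivision (C : List (Finset ℕ)) (S : Finset ℕ) : Prop :=
  (∀ s ∈ S, ∃ i, i < C.length ∧ s ∈ C.getD i ∅) ∧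
  (∀ i, i < C.length → C.getD i ∅ ⊆ S) ∧
  (∀ i j, i < j → j < C.length →
    ∀ s ∈ C.getD i ∅, ∀ t ∈ C.getD j ∅, s < t)

/-- Type A admissibility: `s ∈ C_i` is admissible iff `s = min C₁`, `s = max C_n`,
or `i` is strictly between the first and the last index. (Indices are 0-based.) -/
def AdmissibleA (C : List (Finset ℕ)) (s : ℕ) : Prop :=
  ∃ i, i < C.length ∧ s ∈ C.getD i ∅ ∧
    ((i = 0 ∧ ∀ t ∈ C.getD 0 ∅, s ≤ t) ∨
     (i = C.length - 1 ∧ ∀ t ∈ C.getD i ∅, t ≤ s) ∨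
     (0 < i ∧ i + 1 < C.length))

/-- Type A deletion of `s` from the division `C`. -/
def deleteA (C : List (Finset ℕ)) (s : ℕ) : List (Finset ℕ) :=
  let i := C.findIdx (fun b => decide (s ∈ b))
  let B := C.getD i ∅
  let lo := B.filter (fun t => t < s)
  let hi := B.filter (fun t => s < t)
  if C.length ≤ 1 then []
  else if i = 0 then (hi ∪ C.getD 1 ∅) :: C.drop 2
  else if i = C.length - 1 then C.take (i - 1) ++ [C.getD (i - 1) ∅ ∪ lo]
  else C.take (i - 1) ++ [C.getD (i - 1) ∅ ∪ lo, hi ∪ C.getD (i + 1) ∅] ++ C.drop (i + 2)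

/-- `w` is a (type A) `C`-permutation: each entry is admissible in the division
obtained by deleting the previous entries, and all elements get deleted. -/
def IsCPermA : List (Finset ℕ) → List ℕ → Prop
  | C, [] => ∀ B ∈ C, B = ∅
  | C, s :: w => AdmissibleA C s ∧ IsCPermA (deleteA C s) w

/-- Type B admissibility: `s ∈ C_i` is admissible iff `s = min C₁` or `i ≠ 0`. -/
def AdmissibleB (C : List (Finset ℕ)) (s : ℕ) : Prop :=
  ∃ i, i < C.length ∧ s ∈ C.getD i ∅ ∧
    ((i = 0 ∧ ∀ t ∈ C.getD 0 ∅, s ≤ t) ∨ i ≠ 0)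

/-- Type B deletion of `s` from the division `C`. -/
def deleteB (C : List (Finset ℕ)) (s : ℕ) : List (Finset ℕ) :=
  let i := C.findIdx (fun b => decide (s ∈ b))
  if i = C.length - 1 ∧ 0 < i then
    C.take (i - 1) ++ [C.getD (i - 1) ∅ ∪ ((C.getD i ∅).erase s)]
  else deleteA C s

/-- `w` is a type B `C`-permutation. -/
def IsCPermB : List (Finset ℕ) → List ℕ → Prop
  | C, [] => ∀ B ∈ C, B = ∅
  | C, s :: w => AdmissibleB C s ∧ IsCPermB (deleteB C s) w

/-- A sequence of elements that can be successively (type A) deleted from `C`. -/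
def AdmissibleSeqA : List (Finset ℕ) → List ℕ → Prop
  | _, [] => True
  | C, s :: w => AdmissibleA C s ∧ AdmissibleSeqA (deleteA C s) w

/-- Number of descents of a list: the number of adjacent pairs that decrease. -/
def listDescents {α : Type*} [LinearOrder α] (l : List α) : ℕ :=
  (l.zip l.tail).countP (fun p => decide (p.2 < p.1))

/-- Eulerian number `A(n,k)`: permutations of `{1,…,n}` with exactly `k-1` descents. -/
def eulerianA (n k : ℕ) : ℕ :=
  (List.range' 1 n).permutations.countP (fun l => decide (listDescents l = k - 1))

/-- `A(m,t;r)`: permutations of `{1,…,m+1}` with `t-1` descents and first entry `r+1`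
(declared to be `0` when `t = 0`; it vanishes automatically when `t > m+1`). -/
def eulerianFirst (m t r : ℕ) : ℕ :=
  if t = 0 then 0 else
    (List.range' 1 (m + 1)).permutations.countP
      (fun l => decide (listDescents l = t - 1 ∧ l.headI = r + 1))

/-- The index of `t` in the `C`-permutation `w`: the (1-based) position of the block
containing `t` just before `t` is deleted. -/
def indexFn (C : List (Finset ℕ)) : List ℕ → ℕ → ℕ
  | [], _ => 0
  | s :: w, t =>
      if t = s then C.findIdx (fun b => decide (t ∈ b)) + 1
      else indexFn (deleteA C s) w t

/-- An index function of `C`: any function sending each element of `C_i` into `{1,…,i}`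
(1-based). -/
def IsIndexFn (C : List (Finset ℕ)) (I : ℕ → ℕ) : Prop :=
  ∀ i, i < C.length → ∀ s ∈ C.getD i ∅, 1 ≤ I s ∧ I s ≤ i + 1

/-- `C` is superdiagonal: `|C₁| + ⋯ + |C_i| ≥ i` for all `i`. -/
def Superdiagonal (C : List (Finset ℕ)) : Prop :=
  ∀ i, i ≤ C.length → i ≤ ∑ j ∈ Finset.range i, (C.getD j ∅).card

/-- `C` is subdiagonal: `|C_n| + ⋯ + |C_{n-i+1}| ≥ i` for all `i`. -/
def Subdiagonal (C : List (Finset ℕ)) : Prop :=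
  ∀ i, i ≤ C.length → i ≤ ∑ j ∈ Finset.range i, (C.getD (C.length - 1 - j) ∅).card

/-- The canonical division of `{1,…,c.sum}` with block sizes given by `c`. -/
def divisionOf (c : List ℕ) : List (Finset ℕ) :=
  (List.range c.length).map (fun i => Finset.Ioc ((c.take i).sum) ((c.take (i + 1)).sum))

/-- The number of `C`-permutations for a division with block sizes `c`. -/
noncomputable def NPerm (c : List ℕ) : ℕ :=
  Nat.card {w : List ℕ // IsCPermA (divisionOf c) w}

/-- The division of `{1,…,n}` with all elements in (1-based) position `k`. -/
def midDivision (n k : ℕ) : List (Finset ℕ) :=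
  List.replicate (k - 1) ∅ ++ [Finset.Icc 1 n] ++ List.replicate (n - k) ∅

/-- The hypersimplex `Δ_{k,n} ⊆ ℝ^{n+1}`. -/
def hypersimplex (n k : ℕ) : Set (Fin (n + 1) → ℝ) :=
  convexHull ℝ {x | ∃ T : Finset (Fin (n + 1)), T.card = k ∧
    x = fun i => if i ∈ T then (1 : ℝ) else 0}

/-- The permutohedron `P(y₁,…,y_m) ⊆ ℝ^m`. -/
def permutohedron {m : ℕ} (y : Fin m → ℝ) : Set (Fin m → ℝ) :=
  convexHull ℝ {x | ∃ w : Equiv.Perm (Fin m), x = y ∘ w}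

/-- The polytope `Γ_{k,n} ⊆ ℝ^n`, the convex hull of all `±e_{i₁} ± ⋯ ± e_{i_k}`. -/
def gammaPolytope (n k : ℕ) : Set (Fin n → ℝ) :=
  convexHull ℝ {x | ∃ T : Finset (Fin n), T.card = k ∧ ∃ ε : Fin n → ℝ,
    (∀ i, ε i = 1 ∨ ε i = -1) ∧ x = fun i => if i ∈ T then ε i else 0}

/-- The signed permutohedron `SP(y₁,…,y_n) ⊆ ℝ^n`. -/
def signedPermutohedron {m : ℕ} (y : Fin m → ℝ) : Set (Fin m → ℝ) :=
  convexHull ℝ {x | ∃ w : Equiv.Perm (Fin m), ∃ ε : Fin m → ℝ,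
    (∀ i, ε i = 1 ∨ ε i = -1) ∧ x = fun i => ε i * y (w i)}


/-!
Stanley's argument. Let `D y = (y₀, y₁ - y₀, …, yₙ₋₁ - yₙ₋₂)` and let `T y` be `D y` reduced
coordinatewise mod 1. On `[0,1)ⁿ` the map `T` is injective, and every `x ∈ [0,1)ⁿ` none of whose
block sums `xᵢ + ⋯ + xⱼ₋₁` is an integer (a null condition) is the image of the fractional parts
of its partial sums, a point with distinct coordinates in `(0,1)`. On the open simplex of those
`y ∈ (0,1)ⁿ` ordered like a permutation `σ`, `T` is the affine map `y ↦ D y + d_σ`, with `d_σ`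
the descent vector of `σ` and `det D = 1`; so the image has volume `1/n!`, and its points have
coordinate sum `yₙ₋₁ + des σ ∈ (des σ, des σ + 1)`. Hence the slab
`{x ∈ [0,1]ⁿ : k - 1 ≤ ∑ xᵢ ≤ k}`, which contains the projected hypersimplex, is covered up to a
null set by the images of the `A(n,k)` simplices with `k - 1` descents. Conversely these images
lie in the projected hypersimplex, since `y ↦ D y + d_σ` sends the vertices of the closed simplex,
the 0/1 indicators of the upper sets of `σ`, to 0/1 vectors with `k - 1` or `k` ones.
-/

open Finset
open scoped ENNReal

lemma listDescents_cons_cons {α : Type*} [LinearOrder α] (a b : α) (l : List α) :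
    listDescents (a :: b :: l) = (if b < a then 1 else 0) + listDescents (b :: l) := by
  simp only [listDescents, List.tail_cons, List.zip_cons_cons, List.countP_cons]
  split_ifs <;> simp_all [add_comm]

lemma listDescents_zero_cons (l : List ℕ) : listDescents (0 :: l) = listDescents l := by
  cases l with
  | nil => rfl
  | cons b l => simp [listDescents_cons_cons]

def descentIndicator {α : Type*} [LinearOrder α] {n : ℕ} (v : Fin (n + 1) → α) : Fin n → ℝ :=
  fun i => if v i.succ < v i.castSucc then 1 else 0

lemma sum_descentIndicator {α : Type*} [LinearOrder α] {n : ℕ} (v : Fin (n + 1) → α) :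
    ∑ i, descentIndicator v i = listDescents (List.ofFn v) := by
  induction n with
  | zero => simp [listDescents]
  | succ n ih =>
    rw [Fin.sum_univ_succ, List.ofFn_succ, List.ofFn_succ, listDescents_cons_cons,
      ← List.ofFn_succ (f := fun i => v i.succ), Nat.cast_add, ← ih]
    by_cases h : v 1 < v 0 <;> simp [descentIndicator, h]

lemma descentIndicator_congr {α β : Type*} [LinearOrder α] [LinearOrder β] {n : ℕ}
    {v : Fin (n + 1) → α} {w : Fin (n + 1) → β} (h : ∀ i j, v i < v j ↔ w i < w j) :
    descentIndicator v = descentIndicator w := by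
  ext i
  simp only [descentIndicator, h]

def permWord {n : ℕ} (σ : Equiv.Perm (Fin n)) : List ℕ :=
  List.ofFn fun i => (σ i : ℕ) + 1

lemma permWord_injective {n : ℕ} : Function.Injective (permWord (n := n)) := by
  intro σ τ h
  ext i
  simpa using congrFun (List.ofFn_injective h) i

lemma permWord_perm {n : ℕ} (σ : Equiv.Perm (Fin n)) : (permWord σ).Perm (List.range' 1 n) := by
  have : List.range' 1 n = List.ofFn fun i : Fin n => (i : ℕ) + 1 := by
    apply List.ext_getElem <;> simp [add_comm]
  rw [this, permWord]
  exact σ.ofFn_comp_perm (fun i : Fin n => (i : ℕ) + 1)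

lemma card_filter_permWord {n : ℕ} (p : List ℕ → Prop) [DecidablePred p] :
    #{σ : Equiv.Perm (Fin n) | p (permWord σ)} =
      (List.range' 1 n).permutations.countP (fun l => decide (p l)) := by
  have hnodup := List.nodup_permutations _ (List.nodup_range' (s := 1) (n := n))
  have himage : (univ : Finset (Equiv.Perm (Fin n))).image permWord =
      (List.range' 1 n).permutations.toFinset := by
    refine eq_of_subset_of_card_le (fun l hl => ?_) ?_
    · obtain ⟨σ, -, rfl⟩ := mem_image.1 hl
      exact List.mem_toFinset.2 (List.mem_permutations.2 (permWord_perm σ))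
    · rw [card_image_of_injective _ permWord_injective, List.toFinset_card_of_nodup hnodup,
        List.length_permutations, List.length_range']
      simp [Fintype.card_perm]
  rw [List.countP_eq_length_filter, ← List.toFinset_card_of_nodup (hnodup.filter _),
    List.toFinset_filter, ← himage, filter_image, card_image_of_injective _ permWord_injective]
  simp

lemma card_filter_listDescents_permWord (n k : ℕ) :
    #{σ : Equiv.Perm (Fin n) | listDescents (permWord σ) = k - 1} = eulerianA n k :=
  card_filter_permWord (fun l => listDescents l = k - 1)

lemma fract_sub_eq_of_mem_Ico {a b : ℝ} (ha : a ∈ Set.Ico 0 1) (hb : b ∈ Set.Ico 0 1) :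
    Int.fract (a - b) = a - b + if a < b then 1 else 0 := by
  rw [Int.fract_eq_iff]
  split_ifs with h
  · exact ⟨by linarith [ha.1, hb.2], by linarith, -1, by push_cast; ring⟩
  · exact ⟨by linarith, by linarith [ha.2, hb.1], 0, by simp⟩

lemma fract_fract_add (a b : ℝ) : Int.fract (Int.fract a + b) = Int.fract (a + b) :=
  Int.fract_eq_fract.2 ⟨-⌊a⌋, by rw [Int.fract]; push_cast; ring⟩

lemma fract_fract_sub_fract (a b : ℝ) :
    Int.fract (Int.fract a - Int.fract b) = Int.fract (a - b) :=
  Int.fract_eq_fract.2 ⟨⌊b⌋ - ⌊a⌋, by simp only [Int.fract]; push_cast; ring⟩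

lemma Fin.partialSum_eq_sum {n : ℕ} (x : Fin n → ℝ) (j : Fin (n + 1)) :
    Fin.partialSum x j = ∑ l : Fin n with l.val < j.val, x l :=
  List.sum_take_ofFn x j

def finDiff {n : ℕ} (v : Fin (n + 1) → ℝ) : Fin n → ℝ :=
  fun i => v i.succ - v i.castSucc

lemma sum_finDiff {n : ℕ} (v : Fin (n + 1) → ℝ) : ∑ i, finDiff v i = v (Fin.last n) - v 0 := by
  have h1 := Fin.sum_univ_succ v
  have h2 := Fin.sum_univ_castSucc v
  simp only [finDiff, Finset.sum_sub_distrib]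
  linarith

lemma cons_zero_mem_Ico {n : ℕ} {y : Fin n → ℝ} (hy : ∀ i, y i ∈ Set.Ico 0 1) (j : Fin (n + 1)) :
    (Fin.cons 0 y : Fin (n + 1) → ℝ) j ∈ Set.Ico 0 1 := by
  cases j using Fin.cases with
  | zero => simp
  | succ i => simpa using hy i

def diffMap (n : ℕ) : (Fin n → ℝ) →ₗ[ℝ] (Fin n → ℝ) where
  toFun y := finDiff (Fin.cons 0 y)
  map_add' x y := by
    ext i
    simp only [finDiff, Pi.add_apply]
    cases i.castSucc using Fin.cases <;> simp [add_sub_add_comm]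
  map_smul' c y := by
    ext i
    simp only [finDiff, Pi.smul_apply, smul_eq_mul, RingHom.id_apply]
    cases i.castSucc using Fin.cases <;> simp [mul_sub]

lemma diffMap_apply {n : ℕ} (y : Fin n → ℝ) : diffMap n y = finDiff (Fin.cons 0 y) := rfl

lemma cons_zero_single {n : ℕ} (j : Fin n) :
    (Fin.cons 0 (Pi.single j 1) : Fin (n + 1) → ℝ) = Pi.single j.succ 1 := by
  ext m
  cases m using Fin.cases with
  | zero => simp [(Fin.succ_ne_zero j).symm]
  | succ m => simp [Pi.single_apply]

lemma det_diffMap (n : ℕ) : LinearMap.det (diffMap n) = 1 := by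
  have hentry : ∀ i j, LinearMap.toMatrix (Pi.basisFun ℝ (Fin n)) (Pi.basisFun ℝ (Fin n))
      (diffMap n) i j = (if i = j then 1 else 0) - if i.castSucc = j.succ then 1 else 0 := by
    intro i j
    simp [diffMap_apply, finDiff, cons_zero_single, Pi.single_apply]
  rw [← LinearMap.det_toMatrix (Pi.basisFun ℝ (Fin n)), Matrix.det_of_isLowerTriangular]
  · refine Finset.prod_eq_one fun i _ => ?_
    rw [hentry, if_pos rfl, if_neg Fin.castSucc_lt_succ.ne, sub_zero]
  · intro i j (hij : i < j)
    rw [hentry, if_neg hij.ne, if_neg]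
    · ring
    · rw [Fin.ext_iff]
      simp only [Fin.val_castSucc, Fin.val_succ]
      omega

noncomputable def stanleyMap {n : ℕ} (y : Fin n → ℝ) : Fin n → ℝ :=
  fun i => Int.fract (diffMap n y i)

lemma stanleyMap_eq {n : ℕ} {y : Fin n → ℝ} (hy : ∀ i, y i ∈ Set.Ico 0 1) :
    stanleyMap y = diffMap n y + descentIndicator (Fin.cons 0 y) := by
  ext i
  exact fract_sub_eq_of_mem_Ico (cons_zero_mem_Ico hy _) (cons_zero_mem_Ico hy _)

lemma fract_partialSum_stanleyMap {n : ℕ} {y : Fin n → ℝ} (hy : ∀ i, y i ∈ Set.Ico 0 1)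
    (j : Fin (n + 1)) :
    Int.fract (Fin.partialSum (stanleyMap y) j) = (Fin.cons 0 y : Fin (n + 1) → ℝ) j := by
  induction j using Fin.induction with
  | zero => simp
  | succ i ih =>
    rw [Fin.partialSum_succ, ← fract_fract_add, ih, stanleyMap, add_comm, fract_fract_add,
      diffMap_apply, finDiff, sub_add_cancel, Int.fract_eq_self.2 (cons_zero_mem_Ico hy _)]

lemma stanleyMap_injOn {n : ℕ} : Set.InjOn (stanleyMap (n := n)) {y | ∀ i, y i ∈ Set.Ico 0 1} := by
  intro y hy y' hy' h
  ext i
  have key := fract_partialSum_stanleyMap hy i.succ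
  rw [h, fract_partialSum_stanleyMap hy' i.succ] at key
  simpa using key.symm

lemma cons_zero_fract_partialSum {n : ℕ} (x : Fin n → ℝ) :
    (Fin.cons 0 (fun i => Int.fract (Fin.partialSum x i.succ)) : Fin (n + 1) → ℝ) =
      fun j => Int.fract (Fin.partialSum x j) := by
  ext j
  cases j using Fin.cases <;> simp

lemma stanleyMap_fract_partialSum {n : ℕ} {x : Fin n → ℝ} (hx : ∀ i, x i ∈ Set.Ico 0 1) :
    stanleyMap (fun i => Int.fract (Fin.partialSum x i.succ)) = x := by
  ext i
  rw [stanleyMap, diffMap_apply, cons_zero_fract_partialSum, finDiff, fract_fract_sub_fract,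
    Fin.partialSum_succ, add_sub_cancel_left, Int.fract_eq_self.2 (hx i)]

lemma addHaar_preimage_singleton_eq_zero {E : Type*} [NormedAddCommGroup E] [NormedSpace ℝ E]
    [MeasurableSpace E] [BorelSpace E] [FiniteDimensional ℝ E] (μ : Measure E)
    [μ.IsAddHaarMeasure] {f : E →ₗ[ℝ] ℝ} (hf : f ≠ 0) (c : ℝ) : μ (f ⁻¹' {c}) = 0 := by
  rcases (f ⁻¹' {c}).eq_empty_or_nonempty with h | ⟨x₀, hx₀⟩
  · simp [h]
  have : f ⁻¹' {c} = (fun x => x + -x₀) ⁻¹' (LinearMap.ker f : Set E) := by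
    ext x
    simp_all [sub_eq_zero, ← sub_eq_add_neg]
  rw [this, measure_preimage_add_right]
  exact Measure.addHaar_submodule μ _ (mt LinearMap.ker_eq_top.1 hf)

lemma volume_setOf_apply_eq {n : ℕ} {p q : Fin n} (hpq : p ≠ q) :
    volume {y : Fin n → ℝ | y p = y q} = 0 := by
  let f : (Fin n → ℝ) →ₗ[ℝ] ℝ := @LinearMap.proj ℝ _ _ (fun _ => ℝ) _ _ p - LinearMap.proj q
  have hf : f ≠ 0 := fun h => by simpa [f, hpq] using LinearMap.congr_fun h (Pi.single p 1)
  convert addHaar_preimage_singleton_eq_zero volume hf 0 using 2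
  ext y
  simp [f, sub_eq_zero]

lemma volume_setOf_not_injective (n : ℕ) :
    volume {y : Fin n → ℝ | ¬ Function.Injective y} = 0 := by
  have hsub : {y : Fin n → ℝ | ¬ Function.Injective y} ⊆
      ⋃ p, ⋃ q, ⋃ (_ : p ≠ q), {y | y p = y q} := by
    intro y hy
    simp only [Function.Injective, not_forall] at hy
    obtain ⟨p, q, hpq, hne⟩ := hy
    simp only [Set.mem_iUnion]
    exact ⟨p, q, hne, hpq⟩
  exact measure_mono_null hsub (measure_iUnion_null fun p => measure_iUnion_null fun q =>
    measure_iUnion_null fun hpq => volume_setOf_apply_eq hpq)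

def partialSumₗ {n : ℕ} (j : Fin (n + 1)) : (Fin n → ℝ) →ₗ[ℝ] ℝ :=
  ∑ l : Fin n with l.val < j.val, LinearMap.proj l

lemma partialSumₗ_apply {n : ℕ} (j : Fin (n + 1)) (x : Fin n → ℝ) :
    partialSumₗ j x = Fin.partialSum x j := by
  simp [partialSumₗ, Fin.partialSum_eq_sum]

lemma volume_setOf_not_injective_fract_partialSum (n : ℕ) :
    volume {x : Fin n → ℝ | ¬ Function.Injective fun j => Int.fract (Fin.partialSum x j)} = 0 := by
  have hsub : {x : Fin n → ℝ | ¬ Function.Injective fun j => Int.fract (Fin.partialSum x j)} ⊆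
      ⋃ i, ⋃ j, ⋃ (_ : i ≠ j), ⋃ z : ℤ, (partialSumₗ i - partialSumₗ j) ⁻¹' {(z : ℝ)} := by
    intro x hx
    simp only [Function.Injective, not_forall] at hx
    obtain ⟨i, j, hij, hne⟩ := hx
    obtain ⟨z, hz⟩ := Int.fract_eq_fract.1 hij
    simp only [Set.mem_iUnion]
    exact ⟨i, j, hne, z, by simp [partialSumₗ_apply, hz]⟩
  refine measure_mono_null hsub (measure_iUnion_null fun i => measure_iUnion_null fun j =>
    measure_iUnion_null fun hij => measure_iUnion_null fun z =>
      addHaar_preimage_singleton_eq_zero _ ?_ _)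
  intro h
  have hm : min i.val j.val < n := by omega
  have := LinearMap.congr_fun h (Pi.single ⟨_, hm⟩ 1)
  rw [LinearMap.sub_apply, partialSumₗ_apply, partialSumₗ_apply, Fin.partialSum_eq_sum,
    Fin.partialSum_eq_sum, Finset.sum_pi_single', Finset.sum_pi_single'] at this
  have hval : i.val ≠ j.val := Fin.val_ne_of_ne hij
  simp only [LinearMap.zero_apply, Finset.mem_filter, Finset.mem_univ, true_and] at this
  split_ifs at this <;> first | omega | norm_num at this

def orderCell {n : ℕ} (σ : Equiv.Perm (Fin n)) : Set (Fin n → ℝ) :=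
  {y | (∀ i, y i ∈ Set.Ioo 0 1) ∧ StrictMono (y ∘ σ.symm)}

section OrderCell

variable {n : ℕ} {σ τ : Equiv.Perm (Fin n)} {y : Fin n → ℝ}

lemma lt_iff_of_mem_orderCell (hy : y ∈ orderCell σ) (p q : Fin n) : y p < y q ↔ σ p < σ q := by
  simpa using hy.2.lt_iff_lt (a := σ p) (b := σ q)

lemma mem_orderCell_sort (hy : ∀ i, y i ∈ Set.Ioo 0 1) (hinj : Function.Injective y) :
    y ∈ orderCell (Tuple.sort y).symm := by
  refine ⟨hy, ?_⟩
  simpa using (Tuple.monotone_sort y).strictMono_of_injective (hinj.comp (Tuple.sort y).injective)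

lemma eq_of_mem_orderCell (hσ : y ∈ orderCell σ) (hτ : y ∈ orderCell τ) : σ = τ := by
  have hcomp : y ∘ σ.symm = y ∘ τ.symm :=
    (hσ.2.range_inj hτ.2).1 (by simp [Set.range_comp])
  have hinj : Function.Injective y := by
    simpa [Function.comp_assoc] using hσ.2.injective.comp σ.injective
  exact Equiv.symm_bijective.injective (Equiv.ext fun i => hinj (congrFun hcomp i))

lemma orderCell_eq_preimage (σ : Equiv.Perm (Fin n)) :
    orderCell σ = (fun y => y ∘ σ.symm) ⁻¹' orderCell 1 := by
  ext y
  simp only [orderCell, Set.mem_preimage, Set.mem_ofPred_eq, Function.comp_apply]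
  exact and_congr_left' σ.symm.forall_congr_right.symm

lemma measurableSet_orderCell (σ : Equiv.Perm (Fin n)) : MeasurableSet (orderCell σ) := by
  have : orderCell σ = (⋂ i, {y | y i ∈ Set.Ioo 0 1}) ∩
      ⋂ a, ⋂ b, ⋂ (_ : a < b), {y | y (σ.symm a) < y (σ.symm b)} := by
    ext y
    simp [orderCell, StrictMono]
  rw [this]
  exact (MeasurableSet.iInter fun i => measurable_pi_apply i measurableSet_Ioo).inter
    (.iInter fun a => .iInter fun b => .iInter fun _ =>
      measurableSet_lt (measurable_pi_apply _) (measurable_pi_apply _))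

lemma volume_orderCell_eq_volume_orderCell_one (σ : Equiv.Perm (Fin n)) :
    volume (orderCell σ) = volume (orderCell (1 : Equiv.Perm (Fin n))) := by
  have hcomp : (fun y : Fin n → ℝ => y ∘ σ.symm) = MeasurableEquiv.piCongrLeft (fun _ => ℝ) σ := by
    ext y i
    simp [MeasurableEquiv.piCongrLeft, Equiv.piCongrLeft]
  have hmp : MeasurePreserving (fun y : Fin n → ℝ => y ∘ σ.symm) :=
    hcomp ▸ volume_measurePreserving_piCongrLeft (fun _ : Fin n => ℝ) σ
  rw [orderCell_eq_preimage σ, hmp.measure_preimage (measurableSet_orderCell 1).nullMeasurableSet]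

lemma volume_iUnion_orderCell :
    volume (⋃ σ : Equiv.Perm (Fin n), orderCell σ) = 1 := by
  set cube : Set (Fin n → ℝ) := Set.univ.pi fun _ => Set.Ioo 0 1
  have hcube : volume cube = 1 := by simp [cube, volume_pi_pi]
  refine le_antisymm (hcube ▸ measure_mono ?_) (hcube ▸ ?_)
  · exact Set.iUnion_subset fun σ y hy i _ => hy.1 i
  · calc volume cube
        ≤ volume ((⋃ σ : Equiv.Perm (Fin n), orderCell σ) ∪ {y | ¬ Function.Injective y}) := by
          refine measure_mono fun y hy => ?_
          by_cases hinj : Function.Injective y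
          · exact Or.inl (Set.mem_iUnion.2 ⟨_, mem_orderCell_sort (fun i => hy i trivial) hinj⟩)
          · exact Or.inr hinj
      _ ≤ _ := measure_union_le _ _
      _ = _ := by rw [volume_setOf_not_injective, add_zero]

lemma volume_orderCell (σ : Equiv.Perm (Fin n)) : volume (orderCell σ) = (n ! : ℝ≥0∞)⁻¹ := by
  have hdisj : Pairwise (Function.onFun Disjoint (orderCell (n := n))) :=
    fun σ τ hne => Set.disjoint_left.2 fun y hσ hτ => hne (eq_of_mem_orderCell hσ hτ)
  have h := volume_iUnion_orderCell (n := n)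
  rw [measure_iUnion hdisj measurableSet_orderCell, tsum_fintype] at h
  simp only [volume_orderCell_eq_volume_orderCell_one, Finset.sum_const, Finset.card_univ,
    Fintype.card_perm, Fintype.card_fin, nsmul_eq_mul] at h
  rw [volume_orderCell_eq_volume_orderCell_one]
  exact ENNReal.eq_inv_of_mul_eq_one_left (by rw [mul_comm, h])

end OrderCell

lemma setOf_indicator_eq {ι : Type*} [Fintype ι] [DecidableEq ι] (k : ℕ) :
    {x : ι → ℝ | ∃ T : Finset ι, T.card = k ∧ x = fun i => if i ∈ T then (1 : ℝ) else 0} =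
      {x | (∀ i, x i = 0 ∨ x i = 1) ∧ ∑ i, x i = (k : ℝ)} := by
  ext x
  constructor
  · rintro ⟨T, rfl, rfl⟩
    exact ⟨fun i => by by_cases h : i ∈ T <;> simp [h], by simp⟩
  · rintro ⟨h01, hsum⟩
    set T : Finset ι := {i | x i = 1}
    have hx : x = fun i => if i ∈ T then (1 : ℝ) else 0 := by
      ext i
      rcases h01 i with h | h <;> simp [T, h]
    refine ⟨T, ?_, hx⟩
    rw [hx, Finset.sum_boole, Finset.filter_mem_eq_inter, Finset.univ_inter] at hsum
    exact_mod_cast hsum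

def projVertices (n k : ℕ) : Set (Fin n → ℝ) :=
  {v | (∀ i, v i = 0 ∨ v i = 1) ∧ (∑ i, v i = (k : ℝ) - 1 ∨ ∑ i, v i = k)}

lemma image_init_setOf_sum_eq (n k : ℕ) :
    Fin.init '' {x : Fin (n + 1) → ℝ | (∀ i, x i = 0 ∨ x i = 1) ∧ ∑ i, x i = k} =
      projVertices n k := by
  ext v
  constructor
  · rintro ⟨x, ⟨h01, hsum⟩, rfl⟩
    refine ⟨fun i => h01 _, ?_⟩
    rw [Fin.sum_univ_castSucc] at hsum
    rcases h01 (Fin.last n) with h | h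
    · exact Or.inr (by simpa [Fin.init, h] using hsum)
    · exact Or.inl (by simp only [Fin.init]; linarith)
  · rintro ⟨h01, hsum⟩
    refine ⟨Fin.snoc v (k - ∑ i, v i), ⟨fun i => ?_, ?_⟩, Fin.init_snoc _ _⟩
    · cases i using Fin.lastCases with
      | last => rcases hsum with h | h <;> simp [h]
      | cast i => simpa using h01 i
    · simp [Fin.sum_univ_castSucc]

lemma image_hypersimplex (n k : ℕ) :
    (fun x : Fin (n + 1) → ℝ => fun i : Fin n => x i.castSucc) '' hypersimplex n k =
      convexHull ℝ (projVertices n k) := by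
  rw [hypersimplex, setOf_indicator_eq, ← image_init_setOf_sum_eq]
  exact (LinearMap.funLeft ℝ ℝ Fin.castSucc).image_convexHull _

def slab (n k : ℕ) : Set (Fin n → ℝ) :=
  {x | (∀ i, x i ∈ Set.Icc 0 1) ∧ ∑ i, x i ∈ Set.Icc ((k : ℝ) - 1) k}

lemma convexHull_projVertices_subset_slab (n k : ℕ) :
    convexHull ℝ (projVertices n k) ⊆ slab n k := by
  refine convexHull_min (fun v ⟨h01, hsum⟩ => ⟨fun i => ?_, ?_⟩) ?_
  · rcases h01 i with h | h <;> simp [h]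
  · rcases hsum with h | h <;> simp [h]
  · have hsum : IsLinearMap ℝ fun x : Fin n → ℝ => ∑ i, x i :=
      ⟨fun x y => Finset.sum_add_distrib, fun c x => by simp [Finset.mul_sum]⟩
    have hslab : slab n k = (Set.univ.pi fun _ => Set.Icc 0 1) ∩
        (fun x => ∑ i, x i) ⁻¹' Set.Icc ((k : ℝ) - 1) k := by
      ext x
      simp only [slab, Set.mem_inter_iff, Set.mem_univ_pi, Set.mem_preimage, Set.mem_ofPred_eq]
    rw [hslab]
    exact (convex_pi fun _ _ => convex_Icc 0 1).inter ((convex_Icc _ _).is_linear_preimage hsum)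

lemma mem_convexHull_range_indicator_lt {ι : Type*} [Fintype ι] {N : ℕ} {g : ℕ → ℝ}
    (hg : ∀ r < N, g r ≤ g (r + 1)) (h0 : g 0 = 0) (hN : g N = 1) {h : ι → ℕ}
    (hh : ∀ i, h i ≤ N) :
    (fun i => g (h i)) ∈
      convexHull ℝ (Set.range fun r : ℕ => fun i => if r < h i then (1 : ℝ) else 0) := by
  have hpartial : ∀ m ≤ N, ∑ r ∈ range N, (if r < m then g (r + 1) - g r else 0) = g m := by
    intro m hm
    rw [← Finset.sum_filter, show (range N).filter (· < m) = range m by ext; simp; omega,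
      Finset.sum_range_sub, h0, sub_zero]
  have hcomb : (fun i => g (h i)) =
      ∑ r ∈ range N, (g (r + 1) - g r) • fun i => if r < h i then (1 : ℝ) else 0 := by
    ext i
    simp [Finset.sum_apply, ← hpartial (h i) (hh i)]
  rw [hcomb]
  exact (convex_convexHull ℝ _).sum_mem (fun r hr => sub_nonneg.2 (hg r (mem_range.1 hr)))
    (by rw [Finset.sum_range_sub, h0, hN, sub_zero]) fun r _ => subset_convexHull ℝ _ ⟨r, rfl⟩

lemma finDiff_threshold_add_descentIndicator {α : Type*} [LinearOrder α] {n : ℕ}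
    (v : Fin (n + 1) → α) (t : α) (i : Fin n) :
    finDiff (fun j => if t < v j then (1 : ℝ) else 0) i + descentIndicator v i = 0 ∨
      finDiff (fun j => if t < v j then (1 : ℝ) else 0) i + descentIndicator v i = 1 := by
  simp only [finDiff, descentIndicator]
  split_ifs with hA hB hC hC hB hC hC
  all_goals first
    | exact absurd (hA.trans hC) hB
    | exact absurd (hB.trans_le (not_lt.1 hC)) hA
    | norm_num

def paddedPerm {n : ℕ} (σ : Equiv.Perm (Fin n)) : Fin (n + 1) → ℕ :=
  Fin.cons 0 fun i => (σ i : ℕ) + 1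

def cellMap {n : ℕ} (σ : Equiv.Perm (Fin n)) : (Fin n → ℝ) →ᵃ[ℝ] (Fin n → ℝ) :=
  (diffMap n).toAffineMap + AffineMap.const ℝ _ (descentIndicator (paddedPerm σ))

section CellMap

variable {n k : ℕ} {σ τ : Equiv.Perm (Fin n)} {y : Fin n → ℝ}

lemma listDescents_ofFn_paddedPerm (σ : Equiv.Perm (Fin n)) :
    listDescents (List.ofFn (paddedPerm σ)) = listDescents (permWord σ) := by
  rw [paddedPerm, List.ofFn_cons, listDescents_zero_cons, permWord]

lemma cellMap_apply (σ : Equiv.Perm (Fin n)) (y : Fin n → ℝ) :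
    cellMap σ y = diffMap n y + descentIndicator (paddedPerm σ) := rfl

lemma descentIndicator_cons_of_mem_orderCell (hy : y ∈ orderCell σ) :
    descentIndicator (Fin.cons 0 y : Fin (n + 1) → ℝ) = descentIndicator (paddedPerm σ) := by
  refine descentIndicator_congr fun i j => ?_
  have hpos : ∀ p, 0 < y p := fun p => (hy.1 p).1
  cases i using Fin.cases <;> cases j using Fin.cases <;>
    simp [paddedPerm, lt_iff_of_mem_orderCell hy, hpos, (hpos _).asymm]

lemma stanleyMap_eq_cellMap (hy : y ∈ orderCell σ) : stanleyMap y = cellMap σ y := by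
  rw [stanleyMap_eq fun i => Set.Ioo_subset_Ico_self (hy.1 i),
    descentIndicator_cons_of_mem_orderCell hy, cellMap_apply]

lemma image_stanleyMap_orderCell (σ : Equiv.Perm (Fin n)) :
    stanleyMap '' orderCell σ = cellMap σ '' orderCell σ :=
  Set.image_congr fun _ hy => stanleyMap_eq_cellMap hy

lemma orderCell_subset_Ico (σ : Equiv.Perm (Fin n)) :
    orderCell σ ⊆ {y | ∀ i, y i ∈ Set.Ico 0 1} :=
  fun _ hy i => Set.Ioo_subset_Ico_self (hy.1 i)

lemma volume_image_stanleyMap_orderCell (σ : Equiv.Perm (Fin n)) :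
    volume (stanleyMap '' orderCell σ) = (n ! : ℝ≥0∞)⁻¹ := by
  have : cellMap σ '' orderCell σ =
      (· + descentIndicator (paddedPerm σ)) '' (diffMap n '' orderCell σ) := by
    rw [Set.image_image]
    rfl
  rw [image_stanleyMap_orderCell, this, Set.image_add_right, measure_preimage_add_right,
    Measure.addHaar_image_linearMap, det_diffMap, volume_orderCell]
  simp

lemma measurableSet_image_stanleyMap_orderCell (σ : Equiv.Perm (Fin n)) :
    MeasurableSet (stanleyMap '' orderCell σ) := by
  rw [image_stanleyMap_orderCell]
  exact (measurableSet_orderCell σ).image_of_continuousOn_injOn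
    (cellMap σ).continuous_of_finiteDimensional.continuousOn
    ((stanleyMap_injOn.mono (orderCell_subset_Ico σ)).congr fun _ hy => stanleyMap_eq_cellMap hy)

lemma disjoint_image_stanleyMap_orderCell (hne : σ ≠ τ) :
    Disjoint (stanleyMap '' orderCell σ) (stanleyMap '' orderCell τ) := by
  rw [Set.disjoint_iff_inter_eq_empty,
    ← stanleyMap_injOn.image_inter (orderCell_subset_Ico σ) (orderCell_subset_Ico τ),
    Set.image_eq_empty, Set.eq_empty_iff_forall_notMem]
  exact fun y hy => hne (eq_of_mem_orderCell hy.1 hy.2)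

lemma sum_stanleyMap_of_mem_orderCell (hy : y ∈ orderCell σ) :
    ∑ i, stanleyMap y i =
      (Fin.cons 0 y : Fin (n + 1) → ℝ) (Fin.last n) + listDescents (permWord σ) := by
  simp only [stanleyMap_eq_cellMap hy, cellMap_apply, Pi.add_apply, Finset.sum_add_distrib,
    diffMap_apply, sum_finDiff, sum_descentIndicator, listDescents_ofFn_paddedPerm,
    Fin.cons_zero, sub_zero]

lemma orderCell_subset_convexHull (σ : Equiv.Perm (Fin n)) :
    orderCell σ ⊆ convexHull ℝ
      (Set.range fun r : ℕ => fun p => if r < paddedPerm σ p.succ then (1 : ℝ) else 0) := by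
  intro y hy
  -- `g` runs through `0`, the coordinates of `y` in increasing order, and `1`.
  let g : ℕ → ℝ := fun m => if m = 0 then 0 else if h : m - 1 < n then y (σ.symm ⟨m - 1, h⟩) else 1
  have hgy : (fun p => g (paddedPerm σ p.succ)) = y := by
    ext p
    simp [g, paddedPerm]
  have hg : ∀ r < n + 1, g r ≤ g (r + 1) := by
    intro r hr
    rcases Nat.eq_zero_or_pos r with rfl | hr0
    · simp only [g]
      split_ifs <;> simp [(hy.1 _).1.le]
    · have hr' : r - 1 < n := by omega
      simp only [g, if_neg hr0.ne', dif_pos hr', Nat.add_sub_cancel, Nat.add_one_ne_zero,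
        if_false]
      split_ifs with h
      · exact (hy.2 (Fin.mk_lt_mk.2 (by omega : r - 1 < r))).le
      · exact (hy.1 _).2.le
  rw [← hgy]
  exact mem_convexHull_range_indicator_lt hg (by simp [g]) (by simp [g]) fun p => by
    simp [paddedPerm]

lemma cellMap_mem_projVertices (hk : 1 ≤ k) (hσ : listDescents (permWord σ) = k - 1) (r : ℕ) :
    cellMap σ (fun p => if r < paddedPerm σ p.succ then (1 : ℝ) else 0) ∈ projVertices n k := by
  have hcons : (Fin.cons 0 (fun p => if r < paddedPerm σ p.succ then (1 : ℝ) else 0) :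
      Fin (n + 1) → ℝ) = fun j => if r < paddedPerm σ j then 1 else 0 := by
    ext j
    cases j using Fin.cases <;> simp [paddedPerm]
  rw [cellMap_apply, diffMap_apply, hcons]
  refine ⟨finDiff_threshold_add_descentIndicator _ _, ?_⟩
  simp only [Pi.add_apply, Finset.sum_add_distrib, sum_finDiff, sum_descentIndicator,
    listDescents_ofFn_paddedPerm, hσ, Nat.cast_sub hk, Nat.cast_one]
  have h0 : paddedPerm σ 0 = 0 := rfl
  by_cases h : r < paddedPerm σ (Fin.last n) <;> simp [h, h0]

lemma image_stanleyMap_orderCell_subset (hk : 1 ≤ k) (hσ : listDescents (permWord σ) = k - 1) :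
    stanleyMap '' orderCell σ ⊆ convexHull ℝ (projVertices n k) := by
  rw [image_stanleyMap_orderCell]
  refine (Set.image_mono (orderCell_subset_convexHull σ)).trans ?_
  rw [AffineMap.image_convexHull, ← Set.range_comp]
  exact convexHull_mono (Set.range_subset_iff.2 (cellMap_mem_projVertices hk hσ))

end CellMap

lemma slab_diff_subset_iUnion_image_stanleyMap {n k : ℕ} (hn : 0 < n) :
    slab n k \ {x | ¬ Function.Injective fun j => Int.fract (Fin.partialSum x j)} ⊆
      ⋃ σ ∈ ({σ | listDescents (permWord σ) = k - 1} : Finset (Equiv.Perm (Fin n))),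
        stanleyMap '' orderCell σ := by
  rintro x ⟨⟨hx01, hsum⟩, hinj⟩
  rw [Set.mem_ofPred_eq, not_not] at hinj
  set y : Fin n → ℝ := fun i => Int.fract (Fin.partialSum x i.succ)
  have hinj' : Function.Injective (Fin.cons 0 y : Fin (n + 1) → ℝ) :=
    cons_zero_fract_partialSum x ▸ hinj
  have hx : ∀ i, x i ∈ Set.Ico 0 1 := fun i => ⟨(hx01 i).1, (hx01 i).2.lt_of_ne fun h =>
    Fin.castSucc_lt_succ.ne' (@hinj i.succ i.castSucc (by
      simp only [Fin.partialSum_succ, h, Int.fract_add_one]))⟩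
  have hy : ∀ i, y i ∈ Set.Ioo 0 1 := fun i => ⟨(Int.fract_nonneg _).lt_of_ne fun h =>
    Fin.succ_ne_zero i (hinj' (by simpa using h.symm)), Int.fract_lt_one _⟩
  obtain ⟨σ, hσ⟩ : ∃ σ, y ∈ orderCell σ :=
    ⟨_, mem_orderCell_sort hy fun a b hab => Fin.succ_injective _ (hinj' (by simpa using hab))⟩
  have hlast : (Fin.cons 0 y : Fin (n + 1) → ℝ) (Fin.last n) ∈ Set.Ioo 0 1 := by
    obtain ⟨m, rfl⟩ := Nat.exists_eq_add_one_of_ne_zero hn.ne'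
    rw [← Fin.succ_last, Fin.cons_succ]
    exact hy _
  have hTy : stanleyMap y = x := stanleyMap_fract_partialSum hx
  have hdes := sum_stanleyMap_of_mem_orderCell hσ
  rw [hTy] at hdes
  have hlt : listDescents (permWord σ) < k := by
    exact_mod_cast (by linarith [hsum.2, hlast.1] : (listDescents (permWord σ) : ℝ) < k)
  have hgt : k < listDescents (permWord σ) + 2 := by
    exact_mod_cast (by linarith [hsum.1, hlast.2] : (k : ℝ) < listDescents (permWord σ) + 2)
  exact Set.mem_biUnion (Finset.mem_filter.2 ⟨Finset.mem_univ _, by omega⟩) ⟨y, hσ, hTy⟩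

lemma volume_convexHull_projVertices {n k : ℕ} (hn : 0 < n) (hk : 1 ≤ k) :
    volume (convexHull ℝ (projVertices n k)) =
      #{σ : Equiv.Perm (Fin n) | listDescents (permWord σ) = k - 1} * (n ! : ℝ≥0∞)⁻¹ := by
  set F : Finset (Equiv.Perm (Fin n)) := {σ | listDescents (permWord σ) = k - 1}
  set E := ⋃ σ ∈ F, stanleyMap '' orderCell σ
  have hE : volume E = #F * (n ! : ℝ≥0∞)⁻¹ := by
    rw [measure_biUnion_finset (fun σ _ τ _ hne => disjoint_image_stanleyMap_orderCell hne)
      fun σ _ => measurableSet_image_stanleyMap_orderCell σ]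
    simp [volume_image_stanleyMap_orderCell]
  refine le_antisymm ?_ (hE ▸ measure_mono (Set.iUnion₂_subset fun σ hσ =>
    image_stanleyMap_orderCell_subset hk (by simpa [F] using hσ)))
  calc volume (convexHull ℝ (projVertices n k))
      ≤ volume ({x | ¬ Function.Injective fun j => Int.fract (Fin.partialSum x j)} ∪ E) :=
        measure_mono ((convexHull_projVertices_subset_slab n k).trans
          (Set.sdiff_subset_iff.1 (slab_diff_subset_iUnion_image_stanleyMap hn)))
    _ ≤ _ := measure_union_le _ _
    _ = _ := by rw [volume_setOf_not_injective_fract_partialSum, zero_add, hE]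

/-- `n! · Vol(Δ_{k,n}) = A(n,k)`, where the normalized volume is the
usual volume of the projection onto the first `n` coordinates. -/
theorem hypersimplex_volume (n k : ℕ) (h1 : 1 ≤ k) (h2 : k ≤ n) :
    (n ! : ℝ) *
      (volume ((fun x : Fin (n + 1) → ℝ => fun i : Fin n => x i.castSucc) ''
        hypersimplex n k)).toReal = eulerianA n k := by
  rw [image_hypersimplex, volume_convexHull_projVertices (h1.trans h2) h1,
    card_filter_listDescents_permWord, ENNReal.toReal_mul, ENNReal.toReal_inv,
    ENNReal.toReal_natCast, ENNReal.toReal_natCast]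
  field_simp

end MixedEulerian
end

section
/- For real numbers y_1 ≥ y_2 ≥ ... ≥ y_{n+1}, the permutohedron P(y_1,...,y_{n+1}) equals the set of points (x_1,...,x_{n+1}) ∈ ℝ^{n+1} such that x_1 + ... + x_{n+1} = y_1 + ... + y_{n+1} and, for every nonempty proper subset {i_1,...,i_k} of {1,...,n+1}, x_{i_1} + ... + x_{i_k} ≤ y_1 + ... + y_k. -/
/-!
Each vertex `y ∘ w` satisfies the inequalities, since any `k` coordinates of `y ∘ w` sum to at
most the `k` largest entries of `y`; the constraints are linear, so the whole convex hull does.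
Conversely, a closed convex set is the intersection of the half-spaces containing it, so it
suffices that every linear functional `∑ cᵢ xᵢ` is at least as large at some vertex as at `x`.
Listing the coordinates by decreasing `cᵢ`, summation by parts turns the prefix-sum inequalities
for `x` into this bound, with the vertex that puts `y₁ ≥ y₂ ≥ ⋯` on those coordinates in order.
-/

open scoped Pointwise
open MeasureTheory Nat

namespace MixedEulerian

open Finset

/-- Summation by parts: `∑ d (b - a)` is a nonnegative combination of the prefix sums of `b - a`. -/
theorem sum_range_mul_le_sum_range_mul {N : ℕ} {d a b : ℕ → ℝ}
    (hd : ∀ i, i + 1 < N → d (i + 1) ≤ d i)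
    (hab : ∀ k ≤ N, ∑ j ∈ range k, a j ≤ ∑ j ∈ range k, b j)
    (htot : ∑ j ∈ range N, a j = ∑ j ∈ range N, b j) :
    ∑ j ∈ range N, d j * a j ≤ ∑ j ∈ range N, d j * b j := by
  have hparts := sum_range_by_parts d (b - a) N
  have hterms : ∑ i ∈ range (N - 1), (d (i + 1) - d i) • ∑ j ∈ range (i + 1), (b - a) j ≤ 0 := by
    refine sum_nonpos fun i hi => mul_nonpos_of_nonpos_of_nonneg ?_ ?_
    · exact sub_nonpos.2 (hd i (by have := mem_range.1 hi; omega))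
    · simpa [sum_sub_distrib] using hab (i + 1) (by have := mem_range.1 hi; omega)
  simp only [Pi.sub_apply, sum_sub_distrib, htot, sub_self, smul_eq_mul,
    mul_sub] at hparts hterms
  linarith

variable {m : ℕ}

/-- `a 0 + ⋯ + a (k - 1)`; for antitone `y` this is the paper's `y₁ + ⋯ + y_k`. -/
def prefixSum (a : Fin m → ℝ) (k : ℕ) : ℝ :=
  ∑ j ∈ Finset.univ.filter (fun j : Fin m => (j : ℕ) < k), a j

theorem prefixSum_of_le (a : Fin m → ℝ) {k : ℕ} (hk : m ≤ k) : prefixSum a k = ∑ i, a i := by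
  rw [prefixSum, filter_true_of_mem fun j _ => j.is_lt.trans_le hk]

theorem extend_val_apply (a : Fin m → ℝ) {j : ℕ} (hj : j < m) :
    Function.extend Fin.val a 0 j = a ⟨j, hj⟩ :=
  Fin.val_injective.extend_apply a 0 ⟨j, hj⟩

theorem sum_mul_eq_sum_range_extend (d a : Fin m → ℝ) :
    ∑ i, d i * a i =
      ∑ j ∈ range m, Function.extend Fin.val d 0 j * Function.extend Fin.val a 0 j := by
  rw [← Fin.sum_univ_eq_sum_range]
  simp [Fin.val_injective.extend_apply]

theorem prefixSum_eq_sum_range_extend (a : Fin m → ℝ) {k : ℕ} (hk : k ≤ m) :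
    prefixSum a k = ∑ j ∈ range k, Function.extend Fin.val a 0 j := by
  have hrange : (range m).filter (· < k) = range k := by ext; simp; omega
  rw [prefixSum, sum_filter, ← hrange, sum_filter,
    ← Fin.sum_univ_eq_sum_range (fun j => if j < k then Function.extend Fin.val a 0 j else 0)]
  simp [Fin.val_injective.extend_apply]

theorem sum_mul_le_sum_mul_of_prefixSum_le {d a b : Fin m → ℝ} (hd : Antitone d)
    (hab : ∀ k ≤ m, prefixSum a k ≤ prefixSum b k) (htot : ∑ i, a i = ∑ i, b i) :
    ∑ i, d i * a i ≤ ∑ i, d i * b i := by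
  rw [sum_mul_eq_sum_range_extend, sum_mul_eq_sum_range_extend]
  refine sum_range_mul_le_sum_range_mul (fun i hi => ?_) (fun k hk => ?_) ?_
  · rw [extend_val_apply d hi, extend_val_apply d (by omega)]
    exact hd (Fin.mk_le_mk.2 (by omega))
  · simpa only [prefixSum_eq_sum_range_extend _ hk] using hab k hk
  · rwa [← prefixSum_eq_sum_range_extend _ le_rfl, ← prefixSum_eq_sum_range_extend _ le_rfl,
      prefixSum_of_le _ le_rfl, prefixSum_of_le _ le_rfl]

theorem sum_le_prefixSum {y : Fin m → ℝ} (hy : Antitone y) (S : Finset (Fin m)) :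
    ∑ i ∈ S, y i ≤ prefixSum y #S := by
  -- compare the indicator of `S` with that of the initial segment of the same size
  have hS : #S ≤ m := (card_le_univ S).trans_eq (Fintype.card_fin m)
  have key := sum_mul_le_sum_mul_of_prefixSum_le hy (a := fun i => if i ∈ S then 1 else 0)
    (b := fun i => if (i : ℕ) < #S then 1 else 0) (fun k _ => ?_) ?_
  · simpa [mul_ite, prefixSum, sum_filter] using key
  · simp only [prefixSum, sum_boole, filter_filter, ← lt_min_iff, Fin.card_filter_val_lt]
    have h₁ : #{i : Fin m | (i : ℕ) < k ∧ i ∈ S} ≤ #S :=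
      card_le_card fun i hi => (mem_filter.1 hi).2.2
    have h₂ : #{i : Fin m | (i : ℕ) < k ∧ i ∈ S} ≤ #{i : Fin m | (i : ℕ) < k} :=
      card_le_card fun i hi => mem_filter.2 ⟨mem_univ i, (mem_filter.1 hi).2.1⟩
    rw [Fin.card_filter_val_lt] at h₂
    exact_mod_cast (by omega)
  · simp [sum_boole, Fin.card_filter_val_lt, hS]

theorem sum_comp_perm_le_prefixSum {y : Fin m → ℝ} (hy : Antitone y) (w : Equiv.Perm (Fin m))
    (T : Finset (Fin m)) : ∑ i ∈ T, y (w i) ≤ prefixSum y #T := by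
  simpa [sum_map] using sum_le_prefixSum hy (T.map w.toEmbedding)

theorem exists_perm_sum_mul_le {x y : Fin m → ℝ}
    (hx : ∀ T : Finset (Fin m), ∑ i ∈ T, x i ≤ prefixSum y #T) (htot : ∑ i, x i = ∑ i, y i)
    (c : Fin m → ℝ) : ∃ w : Equiv.Perm (Fin m), ∑ i, x i * c i ≤ ∑ i, y (w i) * c i := by
  -- `σ` lists the coordinates by decreasing weight `c`
  set σ := Tuple.sort (-c)
  have hc : Antitone (c ∘ σ) := fun i j hij => neg_le_neg_iff.1 (Tuple.monotone_sort (-c) hij)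
  have hpre : ∀ k ≤ m, prefixSum (x ∘ σ) k ≤ prefixSum y k := fun k hk => by
    simpa [prefixSum, sum_map, Fin.card_filter_val_lt, hk] using
      hx ((univ.filter fun j : Fin m => (j : ℕ) < k).map σ.toEmbedding)
  have habel := sum_mul_le_sum_mul_of_prefixSum_le hc hpre (by simpa [Equiv.sum_comp] using htot)
  refine ⟨σ.symm, ?_⟩
  calc ∑ i, x i * c i = ∑ i, c (σ i) * x (σ i) := by rw [← Equiv.sum_comp σ]; simp [mul_comm]
    _ ≤ ∑ i, c (σ i) * y i := habel
    _ = ∑ i, y (σ.symm i) * c i := by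
      rw [← Equiv.sum_comp σ fun i => y (σ.symm i) * c i]; simp [mul_comm]

theorem isLinearMap_sum_apply {ι : Type*} (T : Finset ι) :
    IsLinearMap ℝ fun x : ι → ℝ => ∑ i ∈ T, x i :=
  ⟨fun _ _ => sum_add_distrib, fun _ _ => (mul_sum ..).symm⟩

theorem sum_eq_of_mem_permutohedron {y x : Fin m → ℝ} (hx : x ∈ permutohedron y) :
    ∑ i, x i = ∑ i, y i :=
  convexHull_min (by rintro _ ⟨w, rfl⟩; exact Equiv.sum_comp w y)
    (convex_hyperplane (isLinearMap_sum_apply univ) _) hx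

theorem sum_le_prefixSum_of_mem_permutohedron {y x : Fin m → ℝ} (hy : Antitone y)
    (hx : x ∈ permutohedron y) (T : Finset (Fin m)) : ∑ i ∈ T, x i ≤ prefixSum y #T :=
  convexHull_min (by rintro _ ⟨w, rfl⟩; exact sum_comp_perm_le_prefixSum hy w T)
    (convex_halfSpace_le (isLinearMap_sum_apply T) _) hx

theorem isClosed_permutohedron (y : Fin m → ℝ) : IsClosed (permutohedron y) :=
  (((Set.finite_range fun w : Equiv.Perm (Fin m) => y ∘ w).subset
    (by rintro _ ⟨w, rfl⟩; exact ⟨w, rfl⟩)).isCompact_convexHull ℝ).isClosed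

theorem mem_permutohedron_of_sum_le_prefixSum {y x : Fin m → ℝ}
    (hx : ∀ T : Finset (Fin m), ∑ i ∈ T, x i ≤ prefixSum y #T) (htot : ∑ i, x i = ∑ i, y i) :
    x ∈ permutohedron y := by
  rw [permutohedron, ← iInter_halfSpaces_eq (convex_convexHull ℝ _) (isClosed_permutohedron y),
    Set.mem_iInter]
  intro l
  have hl : ∀ z, l z = ∑ i, z i * l fun j => if i = j then 1 else 0 := fun z => by
    simpa using (l : (Fin m → ℝ) →ₗ[ℝ] ℝ).pi_apply_eq_sum_univ z
  obtain ⟨w, hw⟩ := exists_perm_sum_mul_le hx htot fun i => l fun j => if i = j then 1 else 0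
  exact ⟨y ∘ w, subset_convexHull ℝ _ ⟨w, rfl⟩, by rw [hl x, hl (y ∘ w)]; exact hw⟩

/-- inequality description of the permutohedron. -/
theorem permutohedron_eq_inequalities (n : ℕ) (y : Fin (n + 1) → ℝ) (hy : Antitone y) :
    permutohedron y =
      {x : Fin (n + 1) → ℝ |
        (∑ i, x i = ∑ i, y i) ∧
        ∀ T : Finset (Fin (n + 1)), T.Nonempty → T ≠ Finset.univ →
          ∑ i ∈ T, x i ≤
            ∑ j ∈ Finset.univ.filter (fun j : Fin (n + 1) => (j : ℕ) < T.card), y j} := by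
  ext x
  refine ⟨fun hx => ⟨sum_eq_of_mem_permutohedron hx,
    fun T _ _ => sum_le_prefixSum_of_mem_permutohedron hy hx T⟩, ?_⟩
  rintro ⟨htot, hT⟩
  refine mem_permutohedron_of_sum_le_prefixSum (fun T => ?_) htot
  rcases T.eq_empty_or_nonempty with rfl | hne
  · simp [prefixSum]
  by_cases hu : T = univ
  · rw [hu, Finset.card_univ, Fintype.card_fin, prefixSum_of_le _ le_rfl, htot]
  exact hT T hne hu

end MixedEulerian
end

section
/- For real numbers y_1 ≥ ... ≥ y_n ≥ 0, the signed permutohedron SP(y_1,...,y_n) equals the set of points (x_1,...,x_n) ∈ ℝ^n such that for every 1 ≤ k ≤ n and every k-element subset {i_1,...,i_k} ⊆ {1,...,n}, |x_{i_1}| + ... + |x_{i_k}| ≤ y_1 + ... + y_k. -/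
/-!
Every vertex `(ε_i y_{w(i)})` satisfies the inequalities because `y` is nonnegative and
decreasing, and the inequalities cut out a convex set. Conversely, if `x` satisfies them but lies
outside the (closed) hull, a separating functional `z ↦ ∑ c_i z_i` is larger at `x` than at every
vertex. Ordering the coordinates so that `|c_{σ(1)}| ≥ ⋯ ≥ |c_{σ(n)}|`, the inequalities on the
sets `σ{1,…,k}` and Abel summation give
`∑ c_i x_i ≤ ∑_j |c_{σ(j)}| |x_{σ(j)}| ≤ ∑_j |c_{σ(j)}| y_j`,
which is the value of the functional at the vertex with signs `sign c_i` and permutation `σ⁻¹`.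
-/

open scoped Pointwise
open MeasureTheory Nat

namespace MixedEulerian

open Finset

theorem sum_mul_le_sum_mul_of_antitone {R ι : Type*} [CommRing R] [PartialOrder R]
    [IsOrderedRing R] [LinearOrder ι] {a b d : ι → R}
    (s : Finset ι) (ha : Antitone a) (ha₀ : ∀ i ∈ s, 0 ≤ a i)
    (hbd : ∀ k ∈ s, ∑ j ∈ s with j ≤ k, b j ≤ ∑ j ∈ s with j ≤ k, d j) :
    ∑ i ∈ s, a i * b i ≤ ∑ i ∈ s, a i * d i := by
  classical
  induction s using Finset.induction_on_max generalizing a with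
  | empty => simp
  | insert m s hm ih =>
    have hms : m ∉ s := fun h => (hm m h).false
    have peel : ∀ f : ι → R, ∑ i ∈ insert m s, a i * f i
        = ∑ i ∈ s, (a i - a m) * f i + a m * ∑ j ∈ insert m s with j ≤ m, f j := by
      intro f
      rw [filter_true_of_mem fun j hj => (mem_insert.1 hj).elim le_of_eq fun h => (hm j h).le,
        sum_insert hms, sum_insert hms, mul_add, mul_sum]
      simp only [sub_mul, sum_sub_distrib]
      ring
    have hbd_s : ∀ k ∈ s, ∑ j ∈ s with j ≤ k, b j ≤ ∑ j ∈ s with j ≤ k, d j := by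
      intro k hk
      simpa [filter_insert, not_le.2 (hm k hk)] using hbd k (mem_insert_of_mem hk)
    rw [peel, peel]
    gcongr ?_ + a m * ?_
    · exact ih (fun i j hij => sub_le_sub_right (ha hij) _)
        (fun i hi => sub_nonneg.2 (ha (hm i hi).le)) hbd_s
    · exact ha₀ m (mem_insert_self m s)
    · exact hbd m (mem_insert_self m s)

theorem sum_le_sum_filter_val_lt_card {M : Type*} [AddCommMonoid M] [PartialOrder M]
    [IsOrderedAddMonoid M] {n : ℕ} {y : Fin n → M} (hy : Antitone y) (S : Finset (Fin n)) :
    ∑ i ∈ S, y i ≤ ∑ j ∈ univ.filter (fun j : Fin n => (j : ℕ) < #S), y j := by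
  induction S using Finset.induction_on_max with
  | empty => simp
  | insert a s ha ih =>
    have hsa : #s ≤ a := (card_le_card fun x hx => mem_Iio.2 (ha x hx)).trans (Fin.card_Iio a).le
    set p : Fin n := ⟨#s, hsa.trans_lt a.isLt⟩
    have hfilter : univ.filter (fun j : Fin n => (j : ℕ) < #s + 1)
        = insert p (univ.filter fun j : Fin n => (j : ℕ) < #s) := by
      ext j
      simp only [mem_filter, mem_univ, true_and, mem_insert, Fin.ext_iff, p]
      omega
    rw [sum_insert fun h => (ha a h).false, card_insert_of_notMem fun h => (ha a h).false,
      hfilter, sum_insert (by simp [p])]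
    exact add_le_add (hy (show p ≤ a from hsa)) ih

theorem convex_setOf_sum_abs_le {ι : Type*} (B : Finset ι → ℝ) :
    Convex ℝ {x : ι → ℝ | ∀ T : Finset ι, T.Nonempty → ∑ i ∈ T, |x i| ≤ B T} := by
  intro p hp q hq a b ha hb hab T hT
  calc ∑ i ∈ T, |(a • p + b • q) i| ≤ ∑ i ∈ T, (a * |p i| + b * |q i|) :=
        sum_le_sum fun i _ => (abs_add_le _ _).trans_eq (by
          simp [abs_mul, abs_of_nonneg ha, abs_of_nonneg hb])
    _ = a * ∑ i ∈ T, |p i| + b * ∑ i ∈ T, |q i| := by rw [sum_add_distrib, mul_sum, mul_sum]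
    _ ≤ a * B T + b * B T := by gcongr <;> simp_all
    _ = B T := by rw [← add_mul, hab, one_mul]

theorem mem_convexHull_of_forall_exists_le {E : Type*} [AddCommGroup E] [Module ℝ E]
    [TopologicalSpace E] [IsTopologicalAddGroup E] [ContinuousSMul ℝ E] [LocallyConvexSpace ℝ E]
    {s : Set E} (hs : IsClosed (convexHull ℝ s)) {x : E}
    (h : ∀ f : StrongDual ℝ E, ∃ v ∈ s, f x ≤ f v) : x ∈ convexHull ℝ s := by
  by_contra hx
  obtain ⟨f, u, hfu, hux⟩ := geometric_hahn_banach_closed_point (convex_convexHull ℝ s) hs hx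
  obtain ⟨v, hv, hxv⟩ := h f
  exact (hfu v (subset_convexHull ℝ s hv)).not_ge (hux.le.trans hxv)

def signedPermVertices {m : ℕ} (y : Fin m → ℝ) : Set (Fin m → ℝ) :=
  {x | ∃ w : Equiv.Perm (Fin m), ∃ ε : Fin m → ℝ,
    (∀ i, ε i = 1 ∨ ε i = -1) ∧ x = fun i => ε i * y (w i)}

theorem finite_signedPermVertices {m : ℕ} (y : Fin m → ℝ) : (signedPermVertices y).Finite := by
  refine (Set.finite_univ.image2 (fun (w : Equiv.Perm (Fin m)) ε i => ε i * y (w i))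
    (Set.Finite.pi fun _ => Set.toFinite {1, -1})).subset ?_
  rintro _ ⟨w, ε, hε, rfl⟩
  exact ⟨w, trivial, ε, fun i _ => hε i, rfl⟩

theorem sum_abs_le_of_mem_signedPermVertices {n : ℕ} {y : Fin n → ℝ} (hy : Antitone y)
    (hy₀ : ∀ i, 0 ≤ y i) {v : Fin n → ℝ} (hv : v ∈ signedPermVertices y) (T : Finset (Fin n)) :
    ∑ i ∈ T, |v i| ≤ ∑ j ∈ univ.filter (fun j : Fin n => (j : ℕ) < #T), y j := by
  obtain ⟨w, ε, hε, rfl⟩ := hv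
  have habs : ∀ i, |ε i * y (w i)| = y (w i) := fun i => by
    rcases hε i with h | h <;> simp [h, abs_of_nonneg (hy₀ _)]
  calc ∑ i ∈ T, |ε i * y (w i)| = ∑ i ∈ T.map w.toEmbedding, y i := by simp [habs]
    _ ≤ _ := by simpa using sum_le_sum_filter_val_lt_card hy (T.map w.toEmbedding)

theorem exists_mem_signedPermVertices_sum_mul_ge {n : ℕ} {y : Fin n → ℝ} {x : Fin n → ℝ}
    (hx : ∀ T : Finset (Fin n), T.Nonempty →
      ∑ i ∈ T, |x i| ≤ ∑ j ∈ univ.filter (fun j : Fin n => (j : ℕ) < #T), y j)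
    (c : Fin n → ℝ) : ∃ v ∈ signedPermVertices y, ∑ i, x i * c i ≤ ∑ i, v i * c i := by
  set σ := Tuple.sort fun i => -|c i|
  have hσ : Antitone fun j => |c (σ j)| := fun i j hij => by
    simpa using Tuple.monotone_sort (fun i => -|c i|) hij
  have hpartial : ∀ k ∈ (univ : Finset (Fin n)),
      ∑ j ∈ univ with j ≤ k, |x (σ j)| ≤ ∑ j ∈ univ with j ≤ k, y j := by
    intro k _
    have hfilter : univ.filter (fun j : Fin n => (j : ℕ) < #(Iic k)) = Iic k := by
      ext j
      simp only [mem_filter, mem_univ, true_and, mem_Iic, Fin.card_Iic, Fin.le_def]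
      omega
    simpa [filter_ge_eq_Iic, hfilter] using hx ((Iic k).map σ.toEmbedding) ⟨σ k, by simp⟩
  set ε : Fin n → ℝ := fun i => if 0 ≤ c i then 1 else -1
  have hεc : ∀ i, ε i * c i = |c i| := fun i => by
    by_cases h : 0 ≤ c i
    · simp [ε, h, abs_of_nonneg h]
    · simp [ε, h, abs_of_neg (not_le.1 h)]
  refine ⟨fun i => ε i * y (σ.symm i),
    ⟨σ.symm, ε, fun i => by by_cases h : 0 ≤ c i <;> simp [ε, h], rfl⟩, ?_⟩
  calc ∑ i, x i * c i ≤ ∑ i, |c i| * |x i| :=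
        sum_le_sum fun i _ => (le_abs_self _).trans_eq (by rw [abs_mul, mul_comm])
    _ = ∑ j, |c (σ j)| * |x (σ j)| := (Equiv.sum_comp σ _).symm
    _ ≤ ∑ j, |c (σ j)| * y j :=
        sum_mul_le_sum_mul_of_antitone univ hσ (fun _ _ => abs_nonneg _) hpartial
    _ = ∑ i, |c i| * y (σ.symm i) := by
        rw [← Equiv.sum_comp σ fun i => |c i| * y (σ.symm i)]
        simp
    _ = ∑ i, ε i * y (σ.symm i) * c i := sum_congr rfl fun i _ => by rw [← hεc]; ring

/-- inequality description of the signed permutohedron. -/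
theorem signedPermutohedron_eq_inequalities (n : ℕ) (y : Fin n → ℝ)
    (hy : Antitone y) (hy0 : ∀ i, 0 ≤ y i) :
    signedPermutohedron y =
      {x : Fin n → ℝ | ∀ T : Finset (Fin n), T.Nonempty →
        ∑ i ∈ T, |x i| ≤
          ∑ j ∈ Finset.univ.filter (fun j : Fin n => (j : ℕ) < T.card), y j} := by
  show convexHull ℝ (signedPermVertices y) = _
  refine (convexHull_min ?_ (convex_setOf_sum_abs_le _)).antisymm fun x hx => ?_
  · exact fun v hv T _ => sum_abs_le_of_mem_signedPermVertices hy hy0 hv T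
  refine mem_convexHull_of_forall_exists_le
    ((finite_signedPermVertices y).isClosed_convexHull (𝕜 := ℝ)) fun f => ?_
  obtain ⟨v, hv, hxv⟩ := exists_mem_signedPermVertices_sum_mul_ge hx
    fun i => f fun j => if i = j then 1 else 0
  have hf : ∀ z, f z = ∑ i, z i * f fun j => if i = j then 1 else 0 := fun z => by
    simpa using LinearMap.pi_apply_eq_sum_univ f.toLinearMap z
  exact ⟨v, hv, by rwa [hf, hf v]⟩

end MixedEulerian
end

section
/- For nonnegative real numbers λ_1,...,λ_n, the Minkowski sum λ_1 Γ_{1,n} + λ_2 Γ_{2,n} + ... + λ_n Γ_{n,n} equals the signed permutohedron SP(λ_1+...+λ_n, λ_2+...+λ_n, ..., λ_n). -/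
open scoped Pointwise
open MeasureTheory Nat

/-!
Both sides are convex hulls, and the Minkowski sum of convex hulls is the convex hull of the
Minkowski sum of the generating sets. A generating point `(ε_j y_{w(j)})_j` of the signed
permutohedron is `∑ λ_i v_i`, where `v_i ∈ Γ_{i+1,n}` carries the signs `ε` on `{j | w(j) ≤ i}`.
Conversely, a linear functional `x ↦ ∑ c_j x_j` is at most the sum of the `k` largest `|c_j|`
on `Γ_{k,n}`; weighting by `λ_i` and summing gives `∑ d_j y_j` with `d` the decreasing
rearrangement of `|c|`, which is its value at a generating point of the signed permutohedron.
Hahn–Banach separation then puts every point of the Minkowski sum into the signed permutohedron.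
-/

open Finset

theorem Fin.val_le_of_strictMono {k n : ℕ} {f : Fin k → Fin n} (hf : StrictMono f) (i : Fin k) :
    (i : ℕ) ≤ f i :=
  calc (i : ℕ) = #(Iio i) := (Fin.card_Iio i).symm
    _ ≤ #(Iio (f i)) :=
      card_le_card_of_injOn f (fun _ hj => by simpa using hf (by simpa using hj)) hf.injective.injOn
    _ = f i := Fin.card_Iio (f i)

theorem Antitone.sum_le_sum_val_lt_card {β : Type*} [AddCommMonoid β] [PartialOrder β]
    [IsOrderedAddMonoid β] {n : ℕ} {d : Fin n → β} (hd : Antitone d) (U : Finset (Fin n)) :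
    ∑ j ∈ U, d j ≤ ∑ j : Fin n with j.val < #U, d j := by
  have hU : #U ≤ n := by simpa using card_le_univ U
  have hfirst : ({j | j.val < #U} : Finset (Fin n)) = univ.map (Fin.castLEEmb hU) := by
    ext j
    simp only [mem_filter, mem_univ, true_and, mem_map, Fin.castLEEmb_apply]
    exact ⟨fun hj => ⟨⟨j, hj⟩, rfl⟩, by rintro ⟨i, rfl⟩; exact i.2⟩
  rw [← U.map_orderEmbOfFin_univ rfl, sum_map, card_map, Finset.card_univ, Fintype.card_fin,
    hfirst, sum_map]
  exact sum_le_sum fun i _ => hd (Fin.val_le_of_strictMono (U.orderEmbOfFin rfl).strictMono i)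

theorem exists_perm_antitone_comp {n : ℕ} {α : Type*} [LinearOrder α] (f : Fin n → α) :
    ∃ σ : Equiv.Perm (Fin n), Antitone (f ∘ σ) :=
  ⟨Tuple.sort (OrderDual.toDual ∘ f), Tuple.monotone_sort (OrderDual.toDual ∘ f)⟩

theorem sum_mul_sum_Iic_eq_sum_mul_sum_Ici {ι R : Type*} [Fintype ι] [Preorder ι]
    [LocallyFiniteOrderBot ι] [LocallyFiniteOrderTop ι] [CommSemiring R] (a b : ι → R) :
    ∑ i, a i * ∑ j ∈ Iic i, b j = ∑ j, b j * ∑ i ∈ Ici j, a i := by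
  simp_rw [mul_sum]
  rw [Finset.sum_comm' (t' := univ) (s' := Ici) (by simp)]
  simp_rw [mul_comm]

namespace MixedEulerian

def gammaGenerators (n k : ℕ) : Set (Fin n → ℝ) :=
  {x | ∃ T : Finset (Fin n), T.card = k ∧ ∃ ε : Fin n → ℝ,
    (∀ i, ε i = 1 ∨ ε i = -1) ∧ x = fun i => if i ∈ T then ε i else 0}

def signedPermGenerators {m : ℕ} (y : Fin m → ℝ) : Set (Fin m → ℝ) :=
  {x | ∃ w : Equiv.Perm (Fin m), ∃ ε : Fin m → ℝ,
    (∀ i, ε i = 1 ∨ ε i = -1) ∧ x = fun i => ε i * y (w i)}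

theorem isClosed_signedPermutohedron {m : ℕ} (y : Fin m → ℝ) :
    IsClosed (signedPermutohedron y) := by
  have hfin : (signedPermGenerators y).Finite := by
    refine (Set.Finite.pi (t := fun _ => Set.range y ∪ Set.range (-y))
      fun _ => (Set.finite_range _).union (Set.finite_range _)).subset ?_
    rintro _ ⟨w, ε, hε, rfl⟩ j -
    rcases hε j with h | h <;> simp [h]
  exact (hfin.isCompact_convexHull (𝕜 := ℝ)).isClosed

theorem sum_mul_le_of_mem_gammaGenerators {n k : ℕ} {c : Fin n → ℝ} {σ : Equiv.Perm (Fin n)}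
    (hσ : Antitone fun j => |c (σ j)|) {v : Fin n → ℝ} (hv : v ∈ gammaGenerators n k) :
    ∑ j, c j * v j ≤ ∑ j : Fin n with j.val < k, |c (σ j)| := by
  obtain ⟨T, rfl, ε, hε, rfl⟩ := hv
  have hsign : ∀ j, c j * ε j ≤ |c j| := fun j => by
    rcases hε j with h | h <;> simp [h, le_abs_self, neg_le_abs]
  calc ∑ j, c j * (if j ∈ T then ε j else 0) = ∑ j ∈ T, c j * ε j := by
        simp only [mul_ite, mul_zero, sum_ite_mem, univ_inter]
    _ ≤ ∑ j ∈ T, |c j| := sum_le_sum fun j _ => hsign j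
    _ = ∑ j ∈ T.map σ.symm.toEmbedding, |c (σ j)| := by simp
    _ ≤ ∑ j : Fin n with j.val < #T, |c (σ j)| := by
        simpa using Antitone.sum_le_sum_val_lt_card hσ (T.map σ.symm.toEmbedding)

theorem exists_mem_signedPermGenerators_sum_mul_eq {m : ℕ} (y c : Fin m → ℝ)
    (σ : Equiv.Perm (Fin m)) :
    ∃ p ∈ signedPermGenerators y, ∑ j, c j * p j = ∑ j, |c (σ j)| * y j := by
  refine ⟨fun j => (if c j < 0 then -1 else 1) * y (σ.symm j),
    ⟨σ.symm, _, fun j => by split_ifs <;> simp, rfl⟩, ?_⟩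
  rw [← Equiv.sum_comp σ]
  refine sum_congr rfl fun j _ => ?_
  simp only [Equiv.symm_apply_apply]
  split_ifs with h
  · rw [abs_of_neg h]; ring
  · rw [abs_of_nonneg (not_lt.mp h)]; ring

theorem signedPermGenerators_subset_sum_smul_gammaGenerators {n : ℕ} (lam : Fin n → ℝ) :
    signedPermGenerators (fun j => ∑ i ∈ Ici j, lam i) ⊆
      ∑ i : Fin n, lam i • gammaGenerators n ((i : ℕ) + 1) := by
  rintro _ ⟨w, ε, hε, rfl⟩
  rw [Set.mem_fintype_sum]
  refine ⟨fun i => lam i • fun j => if w j ≤ i then ε j else 0,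
    fun i => Set.smul_mem_smul_set ⟨({j | w j ≤ i} : Finset _), ?_, ε, hε, by simp⟩, ?_⟩
  · rw [show ({j | w j ≤ i} : Finset _) = (Iic i).map w.symm.toEmbedding by ext; simp]
    simp
  · ext j
    simp only [Finset.sum_apply, Pi.smul_apply, smul_eq_mul, mul_ite, mul_zero]
    rw [← sum_filter, filter_le_eq_Ici, ← sum_mul, mul_comm]

theorem sum_smul_gammaGenerators_subset_signedPermutohedron {n : ℕ} {lam : Fin n → ℝ}
    (hlam : ∀ i, 0 ≤ lam i) :
    ∑ i : Fin n, lam i • gammaGenerators n ((i : ℕ) + 1) ⊆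
      signedPermutohedron (fun j => ∑ i ∈ Ici j, lam i) := by
  intro x hx
  rw [← iInter_halfSpaces_eq (s := signedPermutohedron _) (convex_convexHull ℝ _)
    (isClosed_signedPermutohedron _), Set.mem_iInter]
  intro l
  obtain ⟨v, hv, rfl⟩ := (Set.mem_fintype_sum _ _).mp hx
  choose u hu hvu using fun i => Set.mem_smul_set.mp (hv i)
  set c : Fin n → ℝ := fun j => l (Pi.single j 1)
  have hl : ∀ z, l z = ∑ j, c j * z j := fun z => by
    conv_lhs => rw [← univ_sum_single z]
    refine (map_sum l _ _).trans (sum_congr rfl fun j _ => ?_)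
    rw [mul_comm, ← smul_eq_mul, ← map_smul, ← Pi.single_smul', smul_eq_mul, mul_one]
  obtain ⟨σ, hσ⟩ := exists_perm_antitone_comp fun j => |c j|
  obtain ⟨p, hp, hcp⟩ :=
    exists_mem_signedPermGenerators_sum_mul_eq (fun j => ∑ i ∈ Ici j, lam i) c σ
  refine ⟨p, subset_convexHull ℝ _ hp, ?_⟩
  calc l (∑ i, v i) = ∑ i, lam i * ∑ j, c j * u i j := by
        simp only [← hvu, map_sum, map_smul, smul_eq_mul]
        simp only [hl]
    _ ≤ ∑ i, lam i * ∑ j ∈ Iic i, |c (σ j)| := by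
        gcongr with i
        · exact hlam i
        · rw [← show ({j | j.val < i.val + 1} : Finset (Fin n)) = Iic i from ext fun j => by simp]
          exact sum_mul_le_of_mem_gammaGenerators hσ (hu i)
    _ = l p := by rw [sum_mul_sum_Iic_eq_sum_mul_sum_Ici, hl, hcp]

/-- `λ₁Γ_{1,n} + ⋯ + λ_nΓ_{n,n} = SP(λ₁+⋯+λ_n, λ₂+⋯+λ_n, …, λ_n)`. -/
theorem minkowski_sum_gamma (n : ℕ) (lam : Fin n → ℝ) (hlam : ∀ i, 0 ≤ lam i) :
    ∑ i : Fin n, lam i • gammaPolytope n ((i : ℕ) + 1) =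
      signedPermutohedron (fun j : Fin n =>
        ∑ i ∈ Finset.univ.filter (fun i : Fin n => (j : ℕ) ≤ (i : ℕ)), lam i) := by
  have hy : (fun j : Fin n => ∑ i ∈ univ.filter (fun i : Fin n => (j : ℕ) ≤ i), lam i) =
      fun j => ∑ i ∈ Ici j, lam i := by
    simp only [Fin.val_fin_le, filter_le_eq_Ici]
  have hsum : ∑ i : Fin n, lam i • gammaPolytope n ((i : ℕ) + 1) =
      convexHull ℝ (∑ i : Fin n, lam i • gammaGenerators n ((i : ℕ) + 1)) := by
    simp only [convexHull_sum, convexHull_smul]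
    rfl
  rw [hy, hsum]
  exact (convexHull_min (sum_smul_gammaGenerators_subset_signedPermutohedron hlam)
    (convex_convexHull ℝ _)).antisymm
    (convexHull_mono (signedPermGenerators_subset_sum_smul_gammaGenerators lam))

end MixedEulerian
end

section
/- Let C = (C_1, ∅, ..., ∅, C_n) be a division of a totally ordered set S of size n with all middle sets empty. Then a permutation w of S is a C-permutation if and only if the elements of C_1 appear in w in ascending order and the elements of C_n appear in w in descending order. Consequently, the number of C-permutations is the binomial coefficient C(n, |C_1|). -/
open scoped Pointwise
open MeasureTheory Nat

namespace MixedEulerian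

/-!
Since the middle blocks are empty, only `min C₁` and `max Cₙ` are ever admissible, and deleting
one of them removes it together with one empty block, so the division keeps its shape; as there
are as many blocks as elements, it does not collapse to a single block while two elements remain.
Hence the `C`-permutations are the words that repeatedly take the least remaining element of `C₁`
or the greatest remaining one of `Cₙ`, i.e. the shuffles of `C₁` ascending with `Cₙ` descending.
Splitting on the first letter, their number obeys Pascal's rule.
-/

theorem _root_.Finset.sort_eq_cons_iff {α : Type*} (r : α → α → Prop) [DecidableRel r]
    [IsTrans α r] [Std.Antisymm r] [Std.Total r] [DecidableEq α] {A : Finset α} {s : α}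
    {l : List α} :
    A.sort r = s :: l ↔ (s ∈ A ∧ ∀ t ∈ A, r s t) ∧ l = (A.erase s).sort r := by
  have hsort (hs : s ∈ A) (hmin : ∀ t ∈ A, r s t) : A.sort r = s :: (A.erase s).sort r := by
    conv_lhs => rw [← Finset.insert_erase hs]
    exact Finset.sort_insert r (fun t ht => hmin t (Finset.mem_of_mem_erase ht))
      (Finset.notMem_erase s A)
  refine ⟨fun h => ?_, fun ⟨⟨hs, hmin⟩, hl⟩ => hl ▸ hsort hs hmin⟩
  have hs : s ∈ A := by simp [← Finset.mem_sort r, h]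
  have hmin : ∀ t ∈ A, r s t := by
    intro t ht
    rw [← Finset.mem_sort r, h, List.mem_cons] at ht
    rcases ht with rfl | ht
    · exact (Std.Total.total t t).elim id id
    · exact (List.pairwise_cons.1 (h ▸ Finset.pairwise_sort A r)).1 t ht
  rw [hsort hs hmin] at h
  exact ⟨⟨hs, hmin⟩, (List.cons.inj h).2.symm⟩

theorem _root_.Finset.filter_lt_eq_erase_of_isLeast {α : Type*} [LinearOrder α] {A : Finset α}
    {s : α} (hs : IsLeast ↑A s) : A.filter (fun t => s < t) = A.erase s := by
  ext t
  simp only [Finset.mem_filter, Finset.mem_erase]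
  exact ⟨fun ⟨ht, hst⟩ => ⟨hst.ne', ht⟩, fun ⟨hts, ht⟩ => ⟨ht, (hs.2 ht).lt_of_ne' hts⟩⟩

theorem _root_.Finset.filter_gt_eq_erase_of_isGreatest {α : Type*} [LinearOrder α]
    {B : Finset α} {s : α} (hs : IsGreatest ↑B s) : B.filter (fun t => t < s) = B.erase s :=
  Finset.filter_lt_eq_erase_of_isLeast (α := αᵒᵈ) hs

section MinMaxWord

open Finset

variable {α : Type*} [LinearOrder α]

/-- The `C`-permutations of `(A, ∅, …, ∅, B)`, described without divisions. -/
def IsMinMaxWord : Finset α → Finset α → List α → Prop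
  | A, B, [] => A = ∅ ∧ B = ∅
  | A, B, s :: w => IsLeast ↑A s ∧ IsMinMaxWord (A.erase s) B w ∨
      IsGreatest ↑B s ∧ IsMinMaxWord A (B.erase s) w

theorem isMinMaxWord_empty_right {A : Finset α} {w : List α} :
    IsMinMaxWord A ∅ w ↔ w = A.sort := by
  induction w generalizing A with
  | nil => simp [IsMinMaxWord, eq_comm (a := []), ← List.length_eq_zero_iff]
  | cons s w ih =>
    simp [IsMinMaxWord, ih, eq_comm (a := s :: w), Finset.sort_eq_cons_iff, IsLeast, IsGreatest,
      lowerBounds]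

theorem isMinMaxWord_empty_left {B : Finset α} {w : List α} :
    IsMinMaxWord ∅ B w ↔ w = B.sort (· ≥ ·) := by
  induction w generalizing B with
  | nil => simp [IsMinMaxWord, eq_comm (a := []), ← List.length_eq_zero_iff]
  | cons s w ih =>
    simp [IsMinMaxWord, ih, eq_comm (a := s :: w), Finset.sort_eq_cons_iff, IsLeast, IsGreatest,
      upperBounds]

theorem isLeast_iff_forall_mem_erase_lt {A : Finset α} {s : α} (hs : s ∈ A) :
    IsLeast ↑A s ↔ ∀ t ∈ A.erase s, s < t := by
  simp only [IsLeast, Finset.mem_coe, hs, true_and, mem_lowerBounds, Finset.mem_erase]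
  exact ⟨fun h t ⟨hts, ht⟩ => (h t ht).lt_of_ne' hts,
    fun h t ht => (eq_or_ne t s).elim (fun hts => hts.ge) fun hts => (h t ⟨hts, ht⟩).le⟩

theorem isGreatest_iff_forall_mem_erase_lt {B : Finset α} {s : α} (hs : s ∈ B) :
    IsGreatest ↑B s ↔ ∀ t ∈ B.erase s, t < s :=
  isLeast_iff_forall_mem_erase_lt (α := αᵒᵈ) hs

theorem isMinMaxWord_iff_pairwise_filter {A B : Finset α} {w : List α} (hAB : Disjoint A B)
    (hw : w.Nodup) (hwAB : w.toFinset = A ∪ B) :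
    IsMinMaxWord A B w ↔ (w.filter (fun s => decide (s ∈ A))).Pairwise (· < ·) ∧
      (w.filter (fun s => decide (s ∈ B))).Pairwise (· > ·) := by
  induction w generalizing A B with
  | nil =>
    obtain ⟨rfl, rfl⟩ := Finset.union_eq_empty.1 hwAB.symm
    simp [IsMinMaxWord]
  | cons s w ih =>
    obtain ⟨hsw, hw⟩ := List.nodup_cons.1 hw
    have hs : s ∈ A ∪ B := by simp [← hwAB]
    have hwAB' : w.toFinset = (A ∪ B).erase s := by
      rw [← hwAB, List.toFinset_cons, Finset.erase_insert (by simpa using hsw)]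
    have hfilter (X : Finset α) : w.filter (fun x => decide (x ∈ X.erase s)) =
        w.filter (fun x => decide (x ∈ X)) :=
      List.filter_congr fun x hx => by simp [Finset.mem_erase, ne_of_mem_of_not_mem hx hsw]
    have hmem_filter (X : Finset α) (hX : X ⊆ A ∪ B) (t : α) :
        t ∈ w.filter (fun x => decide (x ∈ X)) ↔ t ∈ X.erase s := by
      rw [List.mem_filter, ← List.mem_toFinset, hwAB', decide_eq_true_iff, Finset.mem_erase,
        Finset.mem_erase]
      exact ⟨fun h => ⟨h.1.1, h.2⟩, fun h => ⟨⟨h.1, hX h.2⟩, h.2⟩⟩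
    rcases Finset.mem_union.1 hs with hsA | hsB
    · have hsB : s ∉ B := Finset.disjoint_left.1 hAB hsA
      have hB : ¬ IsGreatest ↑B s := fun h => hsB h.1
      rw [Finset.erase_union_distrib, Finset.erase_eq_of_notMem hsB] at hwAB'
      rw [IsMinMaxWord, ih (hAB.mono_left (Finset.erase_subset s A)) hw hwAB', hfilter,
        isLeast_iff_forall_mem_erase_lt hsA]
      simp only [List.filter_cons, hsA, hsB, decide_true, decide_false, if_true,
        Bool.false_eq_true, if_false, List.pairwise_cons, hmem_filter A Finset.subset_union_left,
        hB, false_and, or_false, and_assoc]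
    · have hsA : s ∉ A := Finset.disjoint_right.1 hAB hsB
      have hA : ¬ IsLeast ↑A s := fun h => hsA h.1
      rw [Finset.erase_union_distrib, Finset.erase_eq_of_notMem hsA] at hwAB'
      rw [IsMinMaxWord, ih (hAB.mono_right (Finset.erase_subset s B)) hw hwAB', hfilter,
        isGreatest_iff_forall_mem_erase_lt hsB]
      simp only [List.filter_cons, hsA, hsB, decide_true, decide_false, if_true,
        Bool.false_eq_true, if_false, List.pairwise_cons, hmem_filter B Finset.subset_union_right,
        hA, false_and, false_or, gt_iff_lt]
      tauto

theorem setOf_isMinMaxWord_eq_union {A B : Finset α} (hA : A.Nonempty) (hB : B.Nonempty) :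
    {w | IsMinMaxWord A B w} =
      (A.min' hA :: ·) '' {w | IsMinMaxWord (A.erase (A.min' hA)) B w} ∪
      (B.max' hB :: ·) '' {w | IsMinMaxWord A (B.erase (B.max' hB)) w} := by
  ext (_ | ⟨s, w⟩)
  · simp [IsMinMaxWord, hA.ne_empty]
  · have hleast : IsLeast ↑A s ↔ A.min' hA = s := (min'_eq_iff _ _ _).symm
    have hgreatest : IsGreatest ↑B s ↔ B.max' hB = s := (max'_eq_iff _ _ _).symm
    simp only [IsMinMaxWord, hleast, hgreatest, Set.mem_ofPred_eq, Set.mem_union, Set.mem_image,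
      List.cons.injEq]
    aesop

theorem encard_setOf_isMinMaxWord {A B : Finset α} (hAB : Disjoint A B) :
    {w | IsMinMaxWord A B w}.encard = (#A + #B).choose #A := by
  induction h : #A + #B using Nat.strong_induction_on generalizing A B with
  | _ N ih =>
  rcases A.eq_empty_or_nonempty with rfl | hA
  · simp [isMinMaxWord_empty_left]
  rcases B.eq_empty_or_nonempty with rfl | hB
  · simp [isMinMaxWord_empty_right, ← h]
  have ha := A.min'_mem hA
  have hb := B.max'_mem hB
  have hab : A.min' hA ≠ B.max' hB := fun hab => disjoint_left.1 hAB ha (hab ▸ hb)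
  have hdisj : Disjoint ((A.min' hA :: ·) '' {w | IsMinMaxWord (A.erase (A.min' hA)) B w})
      ((B.max' hB :: ·) '' {w | IsMinMaxWord A (B.erase (B.max' hB)) w}) := by
    simp [Set.disjoint_left, hab.symm]
  have hA1 := card_erase_add_one ha
  have hB1 := card_erase_add_one hb
  rw [setOf_isMinMaxWord_eq_union hA hB, Set.encard_union_eq hdisj,
    List.cons_injective.encard_image, List.cons_injective.encard_image,
    ih _ (by omega) (hAB.mono_left (erase_subset _ _)) rfl,
    ih _ (by omega) (hAB.mono_right (erase_subset _ _)) rfl]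
  rw [← hA1, show N = #(A.erase (A.min' hA)) + #B + 1 by omega,
    show #(A.erase (A.min' hA)) + 1 + #(B.erase (B.max' hB)) = #(A.erase (A.min' hA)) + #B by omega,
    Nat.choose_succ_succ', Nat.cast_add]

end MinMaxWord

/-- The index is shifted so that deleting from `endsDivision (m + 1)` gives `endsDivision m` also
for `m = 0`, where the two blocks merge into `A ∪ B`. -/
def endsDivision : ℕ → Finset ℕ → Finset ℕ → List (Finset ℕ)
  | 0, A, B => [A ∪ B]
  | m + 1, A, B => A :: (List.replicate m ∅ ++ [B])

section EndsDivision

open Finset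

variable {m : ℕ} {A B : Finset ℕ} {s : ℕ} {w : List ℕ}

theorem length_endsDivision_succ : (endsDivision (m + 1) A B).length = m + 2 := by
  simp [endsDivision]

theorem getD_endsDivision_succ (i : ℕ) :
    (endsDivision (m + 1) A B).getD i ∅ = if i = 0 then A else if i = m + 1 then B else ∅ := by
  rcases i with _ | i
  · simp [endsDivision]
  · rw [endsDivision, List.getD_cons_succ, List.getD_eq_getElem?_getD, if_neg i.succ_ne_zero]
    simp only [Nat.add_right_cancel_iff, List.getElem?_append, List.length_replicate,
      List.getElem?_replicate, List.getElem?_singleton]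
    split_ifs <;> first | omega | simp

theorem admissibleA_endsDivision_succ :
    AdmissibleA (endsDivision (m + 1) A B) s ↔ IsLeast ↑A s ∨ IsGreatest ↑B s := by
  simp only [AdmissibleA, length_endsDivision_succ, getD_endsDivision_succ]
  constructor
  · rintro ⟨i, hi, hs, h⟩
    split_ifs at hs h with h0 h1
    · rcases h with ⟨-, h⟩ | ⟨h, -⟩ | ⟨h, -⟩
      · exact Or.inl ⟨hs, fun t ht => h t ht⟩
      all_goals omega
    · rcases h with ⟨h, -⟩ | ⟨-, h⟩ | ⟨-, h⟩
      · omega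
      · exact Or.inr ⟨hs, fun t ht => h t ht⟩
      · omega
    · simp at hs
  · rintro (hs | hs)
    · exact ⟨0, by omega, by simpa using hs.1, Or.inl ⟨rfl, fun t ht => hs.2 (by simpa using ht)⟩⟩
    · exact ⟨m + 1, by omega, by simpa using hs.1,
        Or.inr (Or.inl ⟨rfl, fun t ht => hs.2 (by simpa using ht)⟩)⟩

theorem deleteA_endsDivision_succ_of_isLeast (hs : IsLeast ↑A s) :
    deleteA (endsDivision (m + 1) A B) s = endsDivision m (A.erase s) B := by
  have hidx : (endsDivision (m + 1) A B).findIdx (fun b => decide (s ∈ b)) = 0 := by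
    simp [endsDivision, List.findIdx_cons, Finset.mem_coe.1 hs.1]
  unfold deleteA
  rw [hidx]
  rcases m with _ | m <;>
    simp [endsDivision, Finset.filter_lt_eq_erase_of_isLeast hs]

theorem deleteA_endsDivision_succ_of_isGreatest (hsA : s ∉ A) (hs : IsGreatest ↑B s) :
    deleteA (endsDivision (m + 1) A B) s = endsDivision m A (B.erase s) := by
  have hidx : (endsDivision (m + 1) A B).findIdx (fun b => decide (s ∈ b)) = m + 1 := by
    simp [endsDivision, List.findIdx_cons, Finset.mem_coe.1 hs.1, hsA, List.findIdx_append,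
      List.findIdx_eq_length_of_false]
  unfold deleteA
  rw [hidx]
  rcases m with _ | m <;>
    simp [endsDivision, Finset.filter_gt_eq_erase_of_isGreatest hs, List.take_append,
      List.take_replicate]

theorem isCPermA_endsDivision_zero_iff (hAB : Disjoint A B) (h : #A + #B ≤ 1) :
    IsCPermA (endsDivision 0 A B) w ↔ IsMinMaxWord A B w := by
  have hcard : #A = 0 ∧ #B = 0 ∨ #A = 1 ∧ #B = 0 ∨ #A = 0 ∧ #B = 1 := by omega
  simp only [Finset.card_eq_zero, Finset.card_eq_one] at hcard
  obtain ⟨rfl, rfl⟩ | ⟨⟨t, rfl⟩, rfl⟩ | ⟨rfl, ⟨t, rfl⟩⟩ := hcard <;>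
  · simp only [isMinMaxWord_empty_right, isMinMaxWord_empty_left, sort_empty, sort_singleton]
    rcases w with _ | ⟨s, _ | ⟨s', w⟩⟩ <;>
      simp [endsDivision, IsCPermA, AdmissibleA, deleteA, le_total]

theorem isCPermA_endsDivision_iff (hAB : Disjoint A B) (h : #A + #B ≤ m + 1) :
    IsCPermA (endsDivision m A B) w ↔ IsMinMaxWord A B w := by
  induction m generalizing A B w with
  | zero => exact isCPermA_endsDivision_zero_iff hAB h
  | succ m ih =>
    rcases w with _ | ⟨s, w⟩
    · simp [IsCPermA, IsMinMaxWord, endsDivision, or_imp, forall_and]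
    rw [IsCPermA, IsMinMaxWord, admissibleA_endsDivision_succ]
    by_cases hA : IsLeast ↑A s
    · have hB : ¬ IsGreatest ↑B s := fun hB => disjoint_left.1 hAB hA.1 hB.1
      have hcard : #(A.erase s) + #B ≤ m + 1 := by have := card_erase_add_one hA.1; omega
      rw [deleteA_endsDivision_succ_of_isLeast hA, ih (hAB.mono_left (erase_subset _ _)) hcard]
      simp [hA, hB]
    by_cases hB : IsGreatest ↑B s
    · have hsA : s ∉ A := disjoint_right.1 hAB hB.1
      have hcard : #A + #(B.erase s) ≤ m + 1 := by have := card_erase_add_one hB.1; omega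
      rw [deleteA_endsDivision_succ_of_isGreatest hsA hB,
        ih (hAB.mono_right (erase_subset _ _)) hcard]
      simp [hA, hB]
    · simp [hA, hB]

end EndsDivision

theorem IsDivision.disjoint_of_endsDivision {m : ℕ} {A B S : Finset ℕ}
    (hC : IsDivision (endsDivision (m + 1) A B) S) : Disjoint A B :=
  Finset.disjoint_left.2 fun a ha hb => lt_irrefl a <|
    hC.2.2 0 (m + 1) (by omega) (by simp [length_endsDivision_succ]) a
      (by rwa [getD_endsDivision_succ, if_pos rfl]) a
      (by rwa [getD_endsDivision_succ, if_neg m.succ_ne_zero, if_pos rfl])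

theorem IsDivision.union_eq_of_endsDivision {m : ℕ} {A B S : Finset ℕ}
    (hC : IsDivision (endsDivision (m + 1) A B) S) : A ∪ B = S := by
  refine Finset.Subset.antisymm (Finset.union_subset ?_ ?_) fun x hx => ?_
  · have hA := hC.2.1 0 (by simp [length_endsDivision_succ])
    rwa [getD_endsDivision_succ, if_pos rfl] at hA
  · have hB := hC.2.1 (m + 1) (by simp [length_endsDivision_succ])
    rwa [getD_endsDivision_succ, if_neg m.succ_ne_zero, if_pos rfl] at hB
  · obtain ⟨i, -, hx⟩ := hC.1 x hx
    rw [getD_endsDivision_succ] at hx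
    split_ifs at hx <;> simp_all

theorem cperm_first_last_general (n : ℕ) (S C₁ Cn : Finset ℕ) (hS : S.card = n)
    (hC : IsDivision (C₁ :: (List.replicate (n - 2) ∅ ++ [Cn])) S) :
    (∀ w : List ℕ, w.Perm S.toList →
      (IsCPermA (C₁ :: (List.replicate (n - 2) ∅ ++ [Cn])) w ↔
        (w.filter (fun s => decide (s ∈ C₁))).Pairwise (· < ·) ∧
        (w.filter (fun s => decide (s ∈ Cn))).Pairwise (· > ·))) ∧
    Nat.card {w : List ℕ // IsCPermA (C₁ :: (List.replicate (n - 2) ∅ ++ [Cn])) w} =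
      Nat.choose n C₁.card := by
  have hE : C₁ :: (List.replicate (n - 2) ∅ ++ [Cn]) = endsDivision (n - 2 + 1) C₁ Cn := rfl
  rw [hE] at hC ⊢
  have hdisj := hC.disjoint_of_endsDivision
  have hunion := hC.union_eq_of_endsDivision
  have hcard : C₁.card + Cn.card = n := by rw [← Finset.card_union_of_disjoint hdisj, hunion, hS]
  have hcperm (w : List ℕ) :
      IsCPermA (endsDivision (n - 2 + 1) C₁ Cn) w ↔ IsMinMaxWord C₁ Cn w :=
    isCPermA_endsDivision_iff hdisj (by omega)
  refine ⟨fun w hw => ?_, ?_⟩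
  · have hwS : w.toFinset = C₁ ∪ Cn := by
      rw [List.toFinset_eq_of_perm _ _ hw, Finset.toList_toFinset, hunion]
    exact (hcperm w).trans <|
      isMinMaxWord_iff_pairwise_filter hdisj (hw.nodup_iff.2 S.nodup_toList) hwS
  · calc Nat.card {w // IsCPermA (endsDivision (n - 2 + 1) C₁ Cn) w}
        _ = Nat.card {w | IsMinMaxWord C₁ Cn w} := Nat.card_congr (Equiv.subtypeEquivRight hcperm)
        _ = n.choose C₁.card := by
          rw [Nat.card_coe_set_eq, Set.ncard_def, encard_setOf_isMinMaxWord hdisj, hcard,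
            ENat.toNat_natCast]

/-- for `C = (C₁, ∅, …, ∅, C_n)`, a permutation of `S` is a
`C`-permutation iff the elements of `C₁` appear in ascending order and the elements of
`C_n` appear in descending order; hence there are `C(n, |C₁|)` of them. -/
theorem cperm_first_last (n : ℕ) (hn : 2 ≤ n) (S C₁ Cn : Finset ℕ) (hS : S.card = n)
    (hC : IsDivision (C₁ :: (List.replicate (n - 2) ∅ ++ [Cn])) S) :
    (∀ w : List ℕ, w.Perm S.toList →
      (IsCPermA (C₁ :: (List.replicate (n - 2) ∅ ++ [Cn])) w ↔
        (w.filter (fun s => decide (s ∈ C₁))).Pairwise (· < ·) ∧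
        (w.filter (fun s => decide (s ∈ Cn))).Pairwise (· > ·))) ∧
    Nat.card {w : List ℕ // IsCPermA (C₁ :: (List.replicate (n - 2) ∅ ++ [Cn])) w} =
      Nat.choose n C₁.card :=
  cperm_first_last_general n S C₁ Cn hS hC

end MixedEulerian
end
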